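/- arXiv:1207.1742 — 3 statements merged into one kernel-verified Lean document; each statement's English description precedes it below -/
import Mathlib

section
/- Let Q be a stable set of probability measures all equivalent to a reference measure P on (Ω, F_T). For F_t-measurable Y essentially bounded from below, define Π_{s,t}(Y) = ess sup_{Q ∈ Q} E_Q[Y | F_s]. Then Π satisfies the time consistency property: for all r ≤ s ≤ t ≤ T (deterministic times), Π_{r,s}(Π_{s,t}(Y)) = Π_{r,t}(Y) for every Y ∈ L^∞(F_t). Moreover, each Π_{s,t} is monotone, sublinear (positively homogeneous and subadditive), translation invariant with respect to F_s-measurable bounded random variables, and continuous from below. -/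
open MeasureTheory Filter Topology

/-- `f` is an essential supremum (w.r.t. `P`) of the family `S` of functions. -/
def IsCondEssSup {Ω : Type*} [MeasurableSpace Ω] (P : Measure Ω)
    (S : Set (Ω → ℝ)) (f : Ω → ℝ) : Prop :=
  (∀ g ∈ S, g ≤ᵐ[P] f) ∧ ∀ h : Ω → ℝ, (∀ g ∈ S, g ≤ᵐ[P] h) → f ≤ᵐ[P] h

/-- A real-valued function is (uniformly) bounded. -/
def Bdd {Ω : Type*} (Y : Ω → ℝ) : Prop := ∃ c : ℝ, ∀ ω, |Y ω| ≤ c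

section Helpers

variable {Ω : Type} {m m0 : MeasurableSpace Ω} {μ : Measure Ω} {f g : Ω → ℝ} {c : ℝ}

lemma intg_of_bdd [IsFiniteMeasure μ] (hf : AEStronglyMeasurable f μ)
    (h : ∀ᵐ ω ∂μ, |f ω| ≤ c) : Integrable f μ :=
  Integrable.mono' (integrable_const c) hf (by simpa [Real.norm_eq_abs] using h)

lemma condexp_abs_le (hm : m ≤ m0) [IsProbabilityMeasure μ] (hf : AEStronglyMeasurable f μ)
    (h : ∀ᵐ ω ∂μ, |f ω| ≤ c) : ∀ᵐ ω ∂μ, |(μ[f|m]) ω| ≤ c := by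
  have hfi : Integrable f μ := intg_of_bdd hf h
  have h1 : μ[f|m] ≤ᵐ[μ] μ[(fun _ => c)|m] :=
    condExp_mono hfi (integrable_const c) (h.mono fun ω hω => (abs_le.1 hω).2)
  have h2 : μ[(fun _ => -c)|m] ≤ᵐ[μ] μ[f|m] :=
    condExp_mono (integrable_const (-c)) hfi (h.mono fun ω hω => (abs_le.1 hω).1)
  rw [condExp_const hm] at h1
  rw [condExp_const hm] at h2
  filter_upwards [h1, h2] with ω hω1 hω2
  exact abs_le.2 ⟨hω2, hω1⟩

lemma condexp_pos_of_pos (hm : m ≤ m0) [IsProbabilityMeasure μ] (hfi : Integrable f μ)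
    (hpos : ∀ᵐ ω ∂μ, 0 < f ω) : ∀ᵐ ω ∂μ, 0 < (μ[f|m]) ω := by
  set D := μ[f|m] with hD
  have hDm : StronglyMeasurable[m] D := stronglyMeasurable_condExp
  set E : Set Ω := {ω | D ω ≤ 0} with hE
  have hEm : MeasurableSet[m] E := hDm.measurable measurableSet_Iic
  have h1 : ∫ ω in E, D ω ∂μ = ∫ ω in E, f ω ∂μ := setIntegral_condExp hm hfi hEm
  have h2 : ∫ ω in E, D ω ∂μ ≤ 0 := by
    apply setIntegral_nonpos (hm E hEm)
    exact fun ω hω => hω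
  have h3 : 0 ≤ ∫ ω in E, f ω ∂μ :=
    setIntegral_nonneg_ae (hm E hEm) ((hpos.mono fun ω hω _ => hω.le))
  have h4 : ∫ ω in E, f ω ∂μ = 0 := le_antisymm (h1 ▸ h2) h3
  have h5 : ∀ᵐ ω ∂μ.restrict E, f ω = 0 := by
    have := (integral_eq_zero_iff_of_nonneg_ae
      (ae_restrict_of_ae (hpos.mono fun ω hω => hω.le)) hfi.integrableOn).1 h4
    filter_upwards [this] with ω hω using hω
  have h6 : ∀ᵐ ω ∂μ.restrict E, (0:ℝ) < f ω := ae_restrict_of_ae hpos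
  have h7 : μ E = 0 := by
    have : ∀ᵐ ω ∂μ.restrict E, False := by
      filter_upwards [h5, h6] with ω h5 h6; exact absurd h5 (ne_of_gt h6)
    rw [ae_iff] at this
    simpa [Measure.restrict_apply_univ] using this
  have : ∀ᵐ ω ∂μ, ω ∉ E := (measure_eq_zero_iff_ae_notMem (μ := μ) (s := E)).1 h7
  filter_upwards [this] with ω hω
  simpa [hE, not_le] using hω

lemma integral_mul_condexp (hm : m ≤ m0) [IsProbabilityMeasure μ]
    (hfm : StronglyMeasurable[m] f) (hfg : Integrable (f * g) μ) (hg : Integrable g μ) :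
    ∫ ω, f ω * (μ[g|m]) ω ∂μ = ∫ ω, f ω * g ω ∂μ := by
  have h1 : μ[f * g|m] =ᵐ[μ] f * μ[g|m] := condExp_mul_of_stronglyMeasurable_left hfm hfg hg
  calc ∫ ω, f ω * (μ[g|m]) ω ∂μ = ∫ ω, (f * μ[g|m]) ω ∂μ := rfl
    _ = ∫ ω, (μ[f * g|m]) ω ∂μ := (integral_congr_ae h1).symm
    _ = ∫ ω, (f * g) ω ∂μ := integral_condExp hm
    _ = ∫ ω, f ω * g ω ∂μ := rfl

end Helpers

section H2
variable {Ω : Type} {m : MeasurableSpace Ω}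

lemma sup_lim_exists (G : ℕ → Ω → ℝ) (hGm : ∀ n, Measurable[m] (G n)) (c : ℝ) :
    ∃ GG : Ω → ℝ, Measurable[m] GG ∧ (∀ ω, GG ω ≤ c) ∧ (∀ ω, min (G 0 ω) c ≤ GG ω) ∧
      (∀ ω, (∀ n, G n ω ≤ G (n + 1) ω) → (∀ n, |G n ω| ≤ c) →
        Tendsto (fun n => G n ω) atTop (𝓝 (GG ω))) := by
  set H : ℕ → Ω → ℝ := fun n ω => min (partialSups G n ω) c with hH
  have hHmono : ∀ ω, Monotone fun n => H n ω := by
    intro ω a b hab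
    exact min_le_min ((partialSups G).monotone hab ω) le_rfl
  have hHle : ∀ n ω, H n ω ≤ c := fun n ω => min_le_right _ _
  have hbdd : ∀ ω, BddAbove (Set.range fun n => H n ω) := by
    intro ω; exact ⟨c, by rintro x ⟨n, rfl⟩; exact hHle n ω⟩
  refine ⟨fun ω => ⨆ n, H n ω, ?_, ?_, ?_, ?_⟩
  · -- measurability
    have hHm : ∀ n, Measurable[m] (H n) := by
      intro n
      have : Measurable[m] (partialSups G n) := by
        induction n with
        | zero => simpa [partialSups_zero] using hGm 0
        | succ k ih =>
          rw [partialSups_add_one]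
          exact ih.max (hGm (k + 1))
      exact this.min measurable_const
    exact measurable_of_tendsto_metrizable' atTop hHm
      (tendsto_pi_nhds.2 fun ω => tendsto_atTop_ciSup (hHmono ω) (hbdd ω))
  · intro ω; exact ciSup_le fun n => hHle n ω
  · intro ω
    have := le_ciSup (hbdd ω) 0
    simpa [hH, partialSups_zero] using this
  · intro ω hchain hb
    have hps : ∀ n, partialSups G n ω = G n ω := by
      intro n
      induction n with
      | zero => simp [partialSups_zero]
      | succ k ih =>
        rw [partialSups_add_one]
        have : G k ω ≤ G (k + 1) ω := hchain k
        simp [Pi.sup_apply, ih, sup_eq_right.2 this]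
    have hHeq : ∀ n, H n ω = G n ω := by
      intro n; rw [hH]; simp only [hps n]
      exact min_eq_left (abs_le.1 (hb n)).2
    have : Tendsto (fun n => H n ω) atTop (𝓝 (⨆ n, H n ω)) :=
      tendsto_atTop_ciSup (hHmono ω) (hbdd ω)
    exact this.congr fun n => hHeq n

end H2

section H3
variable {Ω : Type} {m m0 : MeasurableSpace Ω}
/-- Conditional monotone convergence for a.e.-monotone uniformly bounded sequences. -/
lemma condexp_tendsto_of_tendsto (hm : m ≤ m0) (μ : Measure Ω) [IsProbabilityMeasure μ]
    (g : ℕ → Ω → ℝ) (W : Ω → ℝ) (c : ℝ)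
    (hgm : ∀ n, AEStronglyMeasurable (g n) μ) (hWm : AEStronglyMeasurable W μ)
    (hgb : ∀ n, ∀ᵐ ω ∂μ, |g n ω| ≤ c)
    (hmono : ∀ n, g n ≤ᵐ[μ] g (n + 1))
    (hlim : ∀ᵐ ω ∂μ, Tendsto (fun n => g n ω) atTop (𝓝 (W ω))) :
    ∀ᵐ ω ∂μ, Tendsto (fun n => (μ[g n|m]) ω) atTop (𝓝 ((μ[W|m]) ω)) := by
  have hWb : ∀ᵐ ω ∂μ, |W ω| ≤ c := by
    filter_upwards [hlim, ae_all_iff.2 hgb] with ω h1 h2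
    have hle : W ω ≤ c := le_of_tendsto h1 (Eventually.of_forall fun n => (abs_le.1 (h2 n)).2)
    have hge : -c ≤ W ω := ge_of_tendsto h1 (Eventually.of_forall fun n => (abs_le.1 (h2 n)).1)
    exact abs_le.2 ⟨hge, hle⟩
  have hWint : Integrable W μ := intg_of_bdd hWm hWb
  have hgint : ∀ n, Integrable (g n) μ := fun n => intg_of_bdd (hgm n) (hgb n)
  set G : ℕ → Ω → ℝ := fun n => μ[g n|m] with hG
  have hGsm : ∀ n, StronglyMeasurable[m] (G n) := fun n => stronglyMeasurable_condExp
  have hGb : ∀ n, ∀ᵐ ω ∂μ, |G n ω| ≤ c := fun n => condexp_abs_le hm (hgm n) (hgb n)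
  have hGmono : ∀ n, G n ≤ᵐ[μ] G (n + 1) := fun n =>
    condExp_mono (hgint n) (hgint (n + 1)) (hmono n)
  obtain ⟨GG, hGGm, hGGle, hGGge, hGGlim⟩ :=
    sup_lim_exists G (fun n => (hGsm n).measurable) c
  have hB : ∀ᵐ ω ∂μ, (∀ n, G n ω ≤ G (n + 1) ω) ∧ (∀ n, |G n ω| ≤ c) :=
    (ae_all_iff.2 hGmono).and (ae_all_iff.2 hGb)
  have hGGtendsto : ∀ᵐ ω ∂μ, Tendsto (fun n => G n ω) atTop (𝓝 (GG ω)) := by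
    filter_upwards [hB] with ω ⟨h1, h2⟩ using hGGlim ω h1 h2
  have hGGb : ∀ᵐ ω ∂μ, |GG ω| ≤ c := by
    filter_upwards [hB, hGGtendsto] with ω ⟨h1, h2⟩ h3
    refine abs_le.2 ⟨?_, hGGle ω⟩
    exact ge_of_tendsto h3 (Eventually.of_forall fun n => (abs_le.1 (h2 n)).1)
  have hGGsm : AEStronglyMeasurable GG μ :=
    ((hGGm.stronglyMeasurable).mono hm).aestronglyMeasurable
  have hGGint : Integrable GG μ := intg_of_bdd hGGsm hGGb
  -- identify GG with μ[W|m]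
  have key : GG =ᵐ[μ] μ[W|m] := by
    refine ae_eq_condExp_of_forall_setIntegral_eq hm hWint
      (fun A hA _ => hGGint.integrableOn) (fun A hA _ => ?_)
      (hGGm.stronglyMeasurable.aestronglyMeasurable)
    have h1 : Tendsto (fun n => ∫ ω in A, G n ω ∂μ) atTop (𝓝 (∫ ω in A, GG ω ∂μ)) := by
      refine tendsto_integral_of_dominated_convergence (fun _ => c)
        (fun n => (hGsm n).mono hm |>.aestronglyMeasurable.restrict) ?_ ?_ ?_
      · exact integrable_const c
      · intro n
        exact ae_restrict_of_ae ((hGb n).mono fun ω h => by simpa [Real.norm_eq_abs] using h)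
      · exact ae_restrict_of_ae hGGtendsto
    have h2 : ∀ n, ∫ ω in A, G n ω ∂μ = ∫ ω in A, g n ω ∂μ := fun n =>
      setIntegral_condExp hm (hgint n) hA
    have h3 : Tendsto (fun n => ∫ ω in A, g n ω ∂μ) atTop (𝓝 (∫ ω in A, W ω ∂μ)) := by
      refine tendsto_integral_of_dominated_convergence (fun _ => c)
        (fun n => (hgm n).restrict) ?_ ?_ ?_
      · exact integrable_const c
      · intro n
        exact ae_restrict_of_ae ((hgb n).mono fun ω h => by simpa [Real.norm_eq_abs] using h)
      · exact ae_restrict_of_ae hlim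
    have h1' : Tendsto (fun n => ∫ ω in A, g n ω ∂μ) atTop (𝓝 (∫ ω in A, GG ω ∂μ)) := by
      refine h1.congr fun n => h2 n
    exact tendsto_nhds_unique h1' h3
  filter_upwards [hGGtendsto, key] with ω h1 h2
  rw [← h2]
  exact h1

end H3

lemma rnd_mul {Ω : Type} [MeasurableSpace Ω] {ν P : Measure Ω} [SigmaFinite ν] [SigmaFinite P]
    (hν : ν ≪ P) (f : Ω → ℝ) :
    ∫ ω, (ν.rnDeriv P ω).toReal * f ω ∂P = ∫ ω, f ω ∂ν := by
  simpa [smul_eq_mul] using integral_rnDeriv_smul hν (f := f)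

/-- Composition/pasting: the measure with the pasted density computes the two-step
conditional expectation. -/
lemma comp_condexp {Ω : Type} [mΩ : MeasurableSpace Ω]
    (F : Filtration ℝ mΩ) (P : Measure Ω) [IsProbabilityMeasure P]
    {Q₁ Q₂ S : Measure Ω} [IsProbabilityMeasure Q₁] [IsProbabilityMeasure Q₂]
    [IsProbabilityMeasure S]
    (hQ₁ : Q₁ ≪ P ∧ P ≪ Q₁) (hQ₂ : Q₂ ≪ P ∧ P ≪ Q₂) (hS : S ≪ P ∧ P ≪ S)
    {r s : ℝ} (hrs : r ≤ s) {Y : Ω → ℝ} (hYm : Measurable Y) {c : ℝ} (hc : 0 ≤ c)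
    (hYc : ∀ ω, |Y ω| ≤ c)
    (hdens : (fun ω => (S.rnDeriv P ω).toReal) =ᵐ[P] fun ω =>
      (Q₁.rnDeriv P ω).toReal / (P[fun ω' => (Q₁.rnDeriv P ω').toReal | F s]) ω *
        (P[fun ω' => (Q₂.rnDeriv P ω').toReal | F s]) ω) :
    S[Y|F r] =ᵐ[P] Q₂[(Q₁[Y|F s])|F r] := by
  set Z₁ : Ω → ℝ := fun ω => (Q₁.rnDeriv P ω).toReal with hZ₁def
  set Z₂ : Ω → ℝ := fun ω => (Q₂.rnDeriv P ω).toReal with hZ₂def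
  set ZS : Ω → ℝ := fun ω => (S.rnDeriv P ω).toReal with hZSdef
  set D₁ : Ω → ℝ := P[Z₁|F s] with hD₁def
  set D₂ : Ω → ℝ := P[Z₂|F s] with hD₂def
  set g : Ω → ℝ := fun ω => D₂ ω / D₁ ω with hgdef
  have hZ₁int : Integrable Z₁ P := Measure.integrable_toReal_rnDeriv
  have hZ₂int : Integrable Z₂ P := Measure.integrable_toReal_rnDeriv
  have hZSint : Integrable ZS P := Measure.integrable_toReal_rnDeriv
  have hZ₁m : Measurable Z₁ := (Measure.measurable_rnDeriv _ _).ennreal_toReal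
  have hZ₂m : Measurable Z₂ := (Measure.measurable_rnDeriv _ _).ennreal_toReal
  have hZSm : Measurable ZS := (Measure.measurable_rnDeriv _ _).ennreal_toReal
  have hZ₁pos : ∀ᵐ ω ∂P, 0 < Z₁ ω := by
    have h1 := hQ₁.2.ae_le (Measure.rnDeriv_pos hQ₁.1)
    have h2 := Measure.rnDeriv_lt_top Q₁ P
    filter_upwards [h1, h2] with ω hpos hlt
    exact ENNReal.toReal_pos hpos.ne' hlt.ne
  have hD₁pos : ∀ᵐ ω ∂P, 0 < D₁ ω := condexp_pos_of_pos (F.le s) hZ₁int hZ₁pos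
  have hgm : StronglyMeasurable[F s] g :=
    (stronglyMeasurable_condExp.measurable.div stronglyMeasurable_condExp.measurable
      ).stronglyMeasurable
  have hZ₁g : (fun ω => g ω * Z₁ ω) =ᵐ[P] ZS := by
    filter_upwards [hdens] with ω hω
    rw [hω]; simp only [hgdef]; ring
  have hgZ₁int : Integrable (fun ω => g ω * Z₁ ω) P := hZSint.congr hZ₁g.symm
  have hgD₁ : (fun ω => g ω * D₁ ω) =ᵐ[P] D₂ := by
    filter_upwards [hD₁pos] with ω hω
    simp only [hgdef]
    field_simp
  have hgD₁int : Integrable (fun ω => g ω * D₁ ω) P := integrable_condExp.congr hgD₁.symm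
  have hEZS : P[ZS|F s] =ᵐ[P] D₂ := by
    have h1 : P[ZS|F s] =ᵐ[P] P[g * Z₁|F s] := condExp_congr_ae hZ₁g.symm
    have h2 : P[g * Z₁|F s] =ᵐ[P] g * P[Z₁|F s] :=
      condExp_mul_of_stronglyMeasurable_left hgm (by exact hgZ₁int) hZ₁int
    exact h1.trans (h2.trans hgD₁)
  set V : Ω → ℝ := Q₁[Y|F s] with hVdef
  set U : Ω → ℝ := Q₂[V|F r] with hUdef
  have hYsmP : AEStronglyMeasurable Y P := hYm.stronglyMeasurable.aestronglyMeasurable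
  have hYsmQ₁ : AEStronglyMeasurable Y Q₁ := hYm.stronglyMeasurable.aestronglyMeasurable
  have hVsm : StronglyMeasurable[F s] V := stronglyMeasurable_condExp
  have hVsm0 : StronglyMeasurable V := hVsm.mono (F.le s)
  have hVb_P : ∀ᵐ ω ∂P, |V ω| ≤ c :=
    hQ₁.2.ae_le (condexp_abs_le (F.le s) hYsmQ₁ (ae_of_all _ hYc))
  have hVb_Q₂ : ∀ᵐ ω ∂Q₂, |V ω| ≤ c := hQ₂.1.ae_le hVb_P
  have hVb_Q₁ : ∀ᵐ ω ∂Q₁, |V ω| ≤ c := hQ₁.1.ae_le hVb_P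
  have hVint_Q₂ : Integrable V Q₂ := intg_of_bdd hVsm0.aestronglyMeasurable hVb_Q₂
  have hUsm : StronglyMeasurable[F r] U := stronglyMeasurable_condExp
  have hUsm0 : StronglyMeasurable U := hUsm.mono (F.le r)
  have hUb_Q₂ : ∀ᵐ ω ∂Q₂, |U ω| ≤ c :=
    condexp_abs_le (F.le r) hVsm0.aestronglyMeasurable hVb_Q₂
  have hUb_P : ∀ᵐ ω ∂P, |U ω| ≤ c := hQ₂.2.ae_le hUb_Q₂
  have hUb_S : ∀ᵐ ω ∂S, |U ω| ≤ c := hS.1.ae_le hUb_P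
  -- χ, the indicator of a set A ∈ F r
  have hrs' : F r ≤ F s := F.mono hrs
  have rnd : ∀ (ν : Measure Ω) (inst : SigmaFinite ν), ν ≪ P → ∀ f : Ω → ℝ,
      ∫ ω, (ν.rnDeriv P ω).toReal * f ω ∂P = ∫ ω, f ω ∂ν := fun ν inst hν f => rnd_mul hν f
  have main : ∀ A : Set Ω, MeasurableSet[F r] A → ∫ ω in A, U ω ∂S = ∫ ω in A, Y ω ∂S := by
    intro A hA
    have hAm0 : MeasurableSet A := F.le r A hA
    set χ : Ω → ℝ := A.indicator (fun _ => (1:ℝ)) with hχdef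
    have hχr : StronglyMeasurable[F r] χ := stronglyMeasurable_const.indicator hA
    have hχs : StronglyMeasurable[F s] χ := hχr.mono hrs'
    have hχ0 : StronglyMeasurable χ := hχr.mono (F.le r)
    have hχb : ∀ ω, |χ ω| ≤ 1 := by
      intro ω; by_cases h : ω ∈ A <;> simp [hχdef, Set.indicator_of_mem,
        Set.indicator_of_notMem, h]
    have ind : ∀ (ν : Measure Ω) (f : Ω → ℝ), ∫ ω in A, f ω ∂ν = ∫ ω, χ ω * f ω ∂ν := by
      intro ν f
      rw [← integral_indicator hAm0]
      refine integral_congr_ae (ae_of_all _ fun ω => ?_)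
      by_cases h : ω ∈ A <;> simp [hχdef, h]
    -- bounded products
    have hχUb : ∀ᵐ ω ∂P, |χ ω * U ω| ≤ c := by
      filter_upwards [hUb_P] with ω h
      rw [abs_mul]
      calc |χ ω| * |U ω| ≤ 1 * c := mul_le_mul (hχb ω) h (abs_nonneg _) zero_le_one
        _ = c := one_mul c
    have hχVb : ∀ᵐ ω ∂P, |χ ω * V ω| ≤ c := by
      filter_upwards [hVb_P] with ω h
      rw [abs_mul]
      calc |χ ω| * |V ω| ≤ 1 * c := mul_le_mul (hχb ω) h (abs_nonneg _) zero_le_one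
        _ = c := one_mul c
    have hχUsm : AEStronglyMeasurable (fun ω => χ ω * U ω) P :=
      (hχ0.mul hUsm0).aestronglyMeasurable
    have hχVsm : AEStronglyMeasurable (fun ω => χ ω * V ω) P :=
      (hχ0.mul hVsm0).aestronglyMeasurable
    -- the chain of equalities
    have e1 : ∫ ω in A, U ω ∂S = ∫ ω, χ ω * U ω ∂S := ind S U
    have e2 : ∫ ω, χ ω * U ω ∂S = ∫ ω, ZS ω * (χ ω * U ω) ∂P := (rnd S inferInstance hS.1 _).symm
    have e3 : ∫ ω, ZS ω * (χ ω * U ω) ∂P = ∫ ω, (χ ω * U ω) * ZS ω ∂P :=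
      integral_congr_ae (ae_of_all _ fun ω => by ring)
    have hint_χU_ZS : Integrable ((fun ω => χ ω * U ω) * ZS) P :=
      hZSint.bdd_mul hχUsm hχUb
    have e4 : ∫ ω, (χ ω * U ω) * ZS ω ∂P = ∫ ω, (χ ω * U ω) * (P[ZS|F s]) ω ∂P :=
      (integral_mul_condexp (F.le s) (hχs.mul (hUsm.mono hrs')) hint_χU_ZS hZSint).symm
    have e5 : ∫ ω, (χ ω * U ω) * (P[ZS|F s]) ω ∂P = ∫ ω, (χ ω * U ω) * D₂ ω ∂P :=
      integral_congr_ae (hEZS.mono fun ω hω => by dsimp only; rw [hω])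
    have hint_χU_Z₂ : Integrable ((fun ω => χ ω * U ω) * Z₂) P :=
      hZ₂int.bdd_mul hχUsm hχUb
    have e6 : ∫ ω, (χ ω * U ω) * D₂ ω ∂P = ∫ ω, (χ ω * U ω) * Z₂ ω ∂P :=
      integral_mul_condexp (F.le s) (hχs.mul (hUsm.mono hrs')) hint_χU_Z₂ hZ₂int
    have e7 : ∫ ω, (χ ω * U ω) * Z₂ ω ∂P = ∫ ω, Z₂ ω * (χ ω * U ω) ∂P :=
      integral_congr_ae (ae_of_all _ fun ω => by ring)
    have e8 : ∫ ω, Z₂ ω * (χ ω * U ω) ∂P = ∫ ω, χ ω * U ω ∂Q₂ := rnd Q₂ inferInstance hQ₂.1 _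
    have hχVb_Q₂ : ∀ᵐ ω ∂Q₂, |(χ * V) ω| ≤ c := hQ₂.1.ae_le hχVb
    have hint_χV_Q₂ : Integrable (χ * V) Q₂ :=
      intg_of_bdd ((hχ0.mul hVsm0).aestronglyMeasurable) hχVb_Q₂
    have e9 : ∫ ω, χ ω * U ω ∂Q₂ = ∫ ω, χ ω * V ω ∂Q₂ :=
      integral_mul_condexp (F.le r) hχr hint_χV_Q₂ hVint_Q₂
    have e10 : ∫ ω, χ ω * V ω ∂Q₂ = ∫ ω, Z₂ ω * (χ ω * V ω) ∂P := (rnd Q₂ inferInstance hQ₂.1 _).symm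
    have e11 : ∫ ω, Z₂ ω * (χ ω * V ω) ∂P = ∫ ω, (χ ω * V ω) * Z₂ ω ∂P :=
      integral_congr_ae (ae_of_all _ fun ω => by ring)
    have hint_χV_Z₂ : Integrable ((fun ω => χ ω * V ω) * Z₂) P :=
      hZ₂int.bdd_mul hχVsm hχVb
    have e12 : ∫ ω, (χ ω * V ω) * Z₂ ω ∂P = ∫ ω, (χ ω * V ω) * D₂ ω ∂P :=
      (integral_mul_condexp (F.le s) (hχs.mul hVsm) hint_χV_Z₂ hZ₂int).symm
    have e13 : ∫ ω, (χ ω * V ω) * D₂ ω ∂P = ∫ ω, (χ ω * V ω * g ω) * D₁ ω ∂P := by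
      refine integral_congr_ae ?_
      filter_upwards [hgD₁] with ω hω
      rw [← hω]; ring
    have hint_big_D₁ : Integrable ((fun ω => χ ω * V ω * g ω) * D₁) P := by
      have h1 : Integrable (fun ω => (χ ω * V ω) * (g ω * D₁ ω)) P :=
        hgD₁int.bdd_mul hχVsm hχVb
      exact h1.congr (ae_of_all _ fun ω => by simp only [Pi.mul_apply]; ring)
    have hint_big_Z₁ : Integrable ((fun ω => χ ω * V ω * g ω) * Z₁) P := by
      have h1 : Integrable (fun ω => (χ ω * V ω) * (g ω * Z₁ ω)) P :=
        hgZ₁int.bdd_mul hχVsm hχVb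
      exact h1.congr (ae_of_all _ fun ω => by simp only [Pi.mul_apply]; ring)
    have e14 : ∫ ω, (χ ω * V ω * g ω) * D₁ ω ∂P = ∫ ω, (χ ω * V ω * g ω) * Z₁ ω ∂P :=
      integral_mul_condexp (F.le s) ((hχs.mul hVsm).mul hgm) hint_big_Z₁ hZ₁int
    have e15 : ∫ ω, (χ ω * V ω * g ω) * Z₁ ω ∂P = ∫ ω, Z₁ ω * ((χ ω * g ω) * V ω) ∂P :=
      integral_congr_ae (ae_of_all _ fun ω => by ring)
    have e16 : ∫ ω, Z₁ ω * ((χ ω * g ω) * V ω) ∂P = ∫ ω, (χ ω * g ω) * V ω ∂Q₁ :=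
      rnd Q₁ inferInstance hQ₁.1 _
    -- inner Bayes step: replace V by Y under Q₁
    have hχg_int_Q₁ : Integrable (fun ω => χ ω * g ω) Q₁ := by
      have h1 : Integrable (fun ω => Z₁ ω * (χ ω * g ω)) P := by
        have h2 : Integrable (fun ω => χ ω * (g ω * Z₁ ω)) P :=
          hgZ₁int.bdd_mul hχ0.aestronglyMeasurable (ae_of_all _ fun ω => by
            simpa [Real.norm_eq_abs] using hχb ω)
        exact h2.congr (ae_of_all _ fun ω => by ring_nf)
      exact (integrable_rnDeriv_smul_iff hQ₁.1).1 (by simpa [smul_eq_mul] using h1)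
    have hint_χgV_Q₁ : Integrable ((fun ω => χ ω * g ω) * V) Q₁ := by
      have h1 : Integrable (fun ω => V ω * (χ ω * g ω)) Q₁ :=
        hχg_int_Q₁.bdd_mul hVsm0.aestronglyMeasurable
          (hVb_Q₁.mono fun ω h => by simpa [Real.norm_eq_abs] using h)
      exact h1.congr (ae_of_all _ fun ω => by simp only [Pi.mul_apply]; ring)
    have hint_χgY_Q₁ : Integrable ((fun ω => χ ω * g ω) * Y) Q₁ := by
      have h1 : Integrable (fun ω => Y ω * (χ ω * g ω)) Q₁ :=
        hχg_int_Q₁.bdd_mul hYsmQ₁ (ae_of_all _ fun ω => by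
          simpa [Real.norm_eq_abs] using hYc ω)
      exact h1.congr (ae_of_all _ fun ω => by simp only [Pi.mul_apply]; ring)
    have hYint_Q₁ : Integrable Y Q₁ := intg_of_bdd hYsmQ₁ (ae_of_all _ hYc)
    have e17 : ∫ ω, (χ ω * g ω) * V ω ∂Q₁ = ∫ ω, (χ ω * g ω) * Y ω ∂Q₁ :=
      integral_mul_condexp (F.le s) (hχs.mul hgm) hint_χgY_Q₁ hYint_Q₁
    have e18 : ∫ ω, (χ ω * g ω) * Y ω ∂Q₁ = ∫ ω, Z₁ ω * ((χ ω * g ω) * Y ω) ∂P :=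
      (rnd Q₁ inferInstance hQ₁.1 _).symm
    have e19 : ∫ ω, Z₁ ω * ((χ ω * g ω) * Y ω) ∂P = ∫ ω, (χ ω * Y ω) * (g ω * Z₁ ω) ∂P :=
      integral_congr_ae (ae_of_all _ fun ω => by ring)
    have e20 : ∫ ω, (χ ω * Y ω) * (g ω * Z₁ ω) ∂P = ∫ ω, ZS ω * (χ ω * Y ω) ∂P := by
      refine integral_congr_ae ?_
      filter_upwards [hZ₁g] with ω hω
      rw [hω]; ring
    have e21 : ∫ ω, ZS ω * (χ ω * Y ω) ∂P = ∫ ω, χ ω * Y ω ∂S := rnd S inferInstance hS.1 _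
    have e22 : ∫ ω, χ ω * Y ω ∂S = ∫ ω in A, Y ω ∂S := (ind S Y).symm
    calc ∫ ω in A, U ω ∂S = ∫ ω, χ ω * U ω ∂S := e1
      _ = ∫ ω, ZS ω * (χ ω * U ω) ∂P := e2
      _ = ∫ ω, (χ ω * U ω) * ZS ω ∂P := e3
      _ = ∫ ω, (χ ω * U ω) * (P[ZS|F s]) ω ∂P := e4
      _ = ∫ ω, (χ ω * U ω) * D₂ ω ∂P := e5
      _ = ∫ ω, (χ ω * U ω) * Z₂ ω ∂P := e6
      _ = ∫ ω, Z₂ ω * (χ ω * U ω) ∂P := e7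
      _ = ∫ ω, χ ω * U ω ∂Q₂ := e8
      _ = ∫ ω, χ ω * V ω ∂Q₂ := e9
      _ = ∫ ω, Z₂ ω * (χ ω * V ω) ∂P := e10
      _ = ∫ ω, (χ ω * V ω) * Z₂ ω ∂P := e11
      _ = ∫ ω, (χ ω * V ω) * D₂ ω ∂P := e12
      _ = ∫ ω, (χ ω * V ω * g ω) * D₁ ω ∂P := e13
      _ = ∫ ω, (χ ω * V ω * g ω) * Z₁ ω ∂P := e14
      _ = ∫ ω, Z₁ ω * ((χ ω * g ω) * V ω) ∂P := e15
      _ = ∫ ω, (χ ω * g ω) * V ω ∂Q₁ := e16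
      _ = ∫ ω, (χ ω * g ω) * Y ω ∂Q₁ := e17
      _ = ∫ ω, Z₁ ω * ((χ ω * g ω) * Y ω) ∂P := e18
      _ = ∫ ω, (χ ω * Y ω) * (g ω * Z₁ ω) ∂P := e19
      _ = ∫ ω, ZS ω * (χ ω * Y ω) ∂P := e20
      _ = ∫ ω, χ ω * Y ω ∂S := e21
      _ = ∫ ω in A, Y ω ∂S := e22
  have hYint_S : Integrable Y S := intg_of_bdd hYm.stronglyMeasurable.aestronglyMeasurable
    (ae_of_all _ hYc)
  have hU_eq : U =ᵐ[S] S[Y|F r] := by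
    refine ae_eq_condExp_of_forall_setIntegral_eq (F.le r) hYint_S
      (fun A hA _ => (intg_of_bdd hUsm0.aestronglyMeasurable hUb_S).integrableOn)
      (fun A hA _ => main A hA) hUsm.aestronglyMeasurable
  have h' : U =ᵐ[P] S[Y|F r] := hS.2.ae_le hU_eq
  exact h'.symm

lemma exists_rep {Ω : Type} [mΩ : MeasurableSpace Ω]
    (F : Filtration ℝ mΩ) (P : Measure Ω) [IsProbabilityMeasure P] (T : ℝ)
    (𝒬 : Set (Measure Ω)) (hne : 𝒬.Nonempty)
    (hprob : ∀ Q ∈ 𝒬, IsProbabilityMeasure Q)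
    (hequiv : ∀ Q ∈ 𝒬, Q ≪ P ∧ P ≪ Q)
    (hbif : ∀ s : ℝ, ∀ Q ∈ 𝒬, ∀ R ∈ 𝒬, ∀ A : Set Ω, MeasurableSet[F s] A →
      ∃ S ∈ 𝒬, ∀ X : Ω → ℝ, Measurable[F T] X → Bdd X →
        (S[X | F s]) =ᵐ[P] fun ω =>
          A.indicator (Q[X | F s]) ω + Aᶜ.indicator (R[X | F s]) ω)
    (s : ℝ) (Y : Ω → ℝ) (hY : Measurable[F T] Y) (hYb : Bdd Y)
    {c : ℝ} (hc : 0 ≤ c) (hYc : ∀ ω, |Y ω| ≤ c)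
    (W : Ω → ℝ) (hW : IsCondEssSup P {f | ∃ Q ∈ 𝒬, f =ᵐ[P] Q[Y|F s]} W) :
    ∃ R : ℕ → Measure Ω, (∀ n, R n ∈ 𝒬) ∧
      (∀ n, (R n)[Y|F s] ≤ᵐ[P] (R (n + 1))[Y|F s]) ∧
      (∀ᵐ ω ∂P, Tendsto (fun n => ((R n)[Y|F s]) ω) atTop (𝓝 (W ω))) ∧
      (∃ G : Ω → ℝ, StronglyMeasurable[F s] G ∧ W =ᵐ[P] G) ∧
      (∀ᵐ ω ∂P, |W ω| ≤ c) := by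
  have hYm0 : Measurable Y := hY.mono (F.le T) le_rfl
  set gQ : Measure Ω → Ω → ℝ := fun Q => Q[Y|F s] with hgQ
  have hgsm : ∀ Q : Measure Ω, StronglyMeasurable[F s] (gQ Q) := fun Q =>
    stronglyMeasurable_condExp
  have hgb : ∀ Q ∈ 𝒬, ∀ᵐ ω ∂P, |gQ Q ω| ≤ c := by
    intro Q hQ
    haveI := hprob Q hQ
    exact ((hequiv Q hQ).2).ae_le
      (condexp_abs_le (F.le s) hYm0.stronglyMeasurable.aestronglyMeasurable (ae_of_all _ hYc))
  have hgint : ∀ Q ∈ 𝒬, Integrable (gQ Q) P := fun Q hQ =>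
    intg_of_bdd ((hgsm Q).mono (F.le s)).aestronglyMeasurable (hgb Q hQ)
  set I : Set ℝ := (fun Q => ∫ ω, gQ Q ω ∂P) '' 𝒬 with hI
  have hIne : I.Nonempty := hne.image _
  have hintle : ∀ Q ∈ 𝒬, ∫ ω, gQ Q ω ∂P ≤ c := by
    intro Q hQ
    calc ∫ ω, gQ Q ω ∂P ≤ ∫ _, c ∂P :=
          integral_mono_ae (hgint Q hQ) (integrable_const c)
            ((hgb Q hQ).mono fun ω h => (abs_le.1 h).2)
      _ = c := by simp
  have hIbdd : BddAbove I := by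
    refine ⟨c, ?_⟩; rintro x ⟨Q, hQ, rfl⟩; exact hintle Q hQ
  set M : ℝ := sSup I with hM
  have hle_M : ∀ Q ∈ 𝒬, ∫ ω, gQ Q ω ∂P ≤ M := fun Q hQ => le_csSup hIbdd ⟨Q, hQ, rfl⟩
  have pick : ∀ n : ℕ, ∃ Q, Q ∈ 𝒬 ∧ M - 1 / (n + 1) < ∫ ω, gQ Q ω ∂P := by
    intro n
    have hlt : M - 1 / (n + 1) < M := by
      have : (0:ℝ) < 1 / (n + 1) := by positivity
      linarith
    obtain ⟨x, ⟨Q, hQ, rfl⟩, hx⟩ := exists_lt_of_lt_csSup hIne hlt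
    exact ⟨Q, hQ, hx⟩
  choose Q' hQ'mem hQ'int using pick
  -- bifurcation gives pairwise maxima
  have bifmax : ∀ Q ∈ 𝒬, ∀ R ∈ 𝒬, ∃ S ∈ 𝒬,
      gQ S =ᵐ[P] fun ω => max (gQ Q ω) (gQ R ω) := by
    intro Q hQ R hR
    set A : Set Ω := {ω | gQ R ω ≤ gQ Q ω} with hA
    have hAm : MeasurableSet[F s] A :=
      measurableSet_le (hgsm R).measurable (hgsm Q).measurable
    obtain ⟨S, hS, hSprop⟩ := hbif s Q hQ R hR A hAm
    refine ⟨S, hS, (hSprop Y hY hYb).trans (ae_of_all _ fun ω => ?_)⟩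
    by_cases hω : ω ∈ A
    · have hω' : ω ∉ Aᶜ := by simpa using hω
      simp only [Set.indicator_of_mem hω, Set.indicator_of_notMem hω', add_zero]
      exact (max_eq_left hω).symm
    · have hω' : ω ∈ Aᶜ := hω
      simp only [Set.indicator_of_notMem hω, Set.indicator_of_mem hω', zero_add]
      exact (max_eq_right (le_of_lt (not_le.1 hω))).symm
  have bifmax' : ∀ p q : {Q : Measure Ω // Q ∈ 𝒬}, ∃ r : {Q : Measure Ω // Q ∈ 𝒬},
      gQ r.1 =ᵐ[P] fun ω => max (gQ p.1 ω) (gQ q.1 ω) := by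
    intro p q
    obtain ⟨S, hS, hSeq⟩ := bifmax p.1 p.2 q.1 q.2
    exact ⟨⟨S, hS⟩, hSeq⟩
  choose step hstep using bifmax'
  set Rs : ℕ → {Q : Measure Ω // Q ∈ 𝒬} := fun n =>
    Nat.rec ⟨Q' 0, hQ'mem 0⟩ (fun k prev => step ⟨Q' (k + 1), hQ'mem (k + 1)⟩ prev) n with hRs
  have hRsucc : ∀ n, gQ (Rs (n + 1)).1 =ᵐ[P]
      fun ω => max (gQ (Q' (n + 1)) ω) (gQ (Rs n).1 ω) := fun n =>
    hstep ⟨Q' (n + 1), hQ'mem (n + 1)⟩ (Rs n)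
  have hRmono : ∀ n, gQ (Rs n).1 ≤ᵐ[P] gQ (Rs (n + 1)).1 := by
    intro n
    filter_upwards [hRsucc n] with ω hω
    rw [hω]; exact le_max_right _ _
  have hRlow : ∀ n, M - 1 / (n + 1) < ∫ ω, gQ (Rs n).1 ω ∂P := by
    intro n
    induction n with
    | zero => exact hQ'int 0
    | succ k _ =>
      have h1 : ∫ ω, gQ (Q' (k + 1)) ω ∂P ≤ ∫ ω, gQ (Rs (k + 1)).1 ω ∂P := by
        refine integral_mono_ae (hgint _ (hQ'mem (k + 1))) (hgint _ (Rs (k + 1)).2) ?_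
        filter_upwards [hRsucc k] with ω hω
        rw [hω]; exact le_max_left _ _
      have := hQ'int (k + 1)
      push_cast at this ⊢
      linarith
  have hRtend : Tendsto (fun n => ∫ ω, gQ (Rs n).1 ω ∂P) atTop (𝓝 M) := by
    have hlow : Tendsto (fun n : ℕ => M - 1 / (n + 1)) atTop (𝓝 M) := by
      have : Tendsto (fun n : ℕ => 1 / ((n : ℝ) + 1)) atTop (𝓝 0) :=
        tendsto_one_div_add_atTop_nhds_zero_nat
      simpa using tendsto_const_nhds.sub this
    exact tendsto_of_tendsto_of_tendsto_of_le_of_le hlow tendsto_const_nhds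
      (fun n => (hRlow n).le) (fun n => hle_M _ (Rs n).2)
  obtain ⟨GG, hGGm, hGGle, hGGge, hGGlim⟩ :=
    sup_lim_exists (fun n => gQ (Rs n).1) (fun n => (hgsm _).measurable) c
  have hB : ∀ᵐ ω ∂P, (∀ n, gQ (Rs n).1 ω ≤ gQ (Rs (n + 1)).1 ω) ∧
      (∀ n, |gQ (Rs n).1 ω| ≤ c) :=
    (ae_all_iff.2 hRmono).and (ae_all_iff.2 fun n => hgb _ (Rs n).2)
  have hGGtend : ∀ᵐ ω ∂P, Tendsto (fun n => gQ (Rs n).1 ω) atTop (𝓝 (GG ω)) := by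
    filter_upwards [hB] with ω hω using hGGlim ω hω.1 hω.2
  have hGGb : ∀ᵐ ω ∂P, |GG ω| ≤ c := by
    filter_upwards [hB, hGGtend] with ω hω h3
    exact abs_le.2 ⟨ge_of_tendsto h3 (Eventually.of_forall fun n => (abs_le.1 (hω.2 n)).1),
      hGGle ω⟩
  have hGGsm : AEStronglyMeasurable GG P :=
    ((hGGm.mono (F.le s) le_rfl).stronglyMeasurable).aestronglyMeasurable
  have hGGint : Integrable GG P := intg_of_bdd hGGsm hGGb
  have hGGM : ∫ ω, GG ω ∂P = M := by
    have h1 : Tendsto (fun n => ∫ ω, gQ (Rs n).1 ω ∂P) atTop (𝓝 (∫ ω, GG ω ∂P)) := by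
      refine tendsto_integral_of_dominated_convergence (fun _ => c)
        (fun n => ((hgsm _).mono (F.le s)).aestronglyMeasurable) (integrable_const c)
        (fun n => (hgb _ (Rs n).2).mono fun ω h => by simpa [Real.norm_eq_abs] using h)
        hGGtend
    exact tendsto_nhds_unique h1 hRtend
  -- GG dominates every element
  have hdom : ∀ Q ∈ 𝒬, gQ Q ≤ᵐ[P] GG := by
    intro Q hQ
    have hmaxint : ∀ n, ∫ ω, max (gQ Q ω) (gQ (Rs n).1 ω) ∂P ≤ M := by
      intro n
      obtain ⟨S, hS, hSeq⟩ := bifmax Q hQ (Rs n).1 (Rs n).2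
      rw [← integral_congr_ae hSeq]
      exact hle_M S hS
    have hmb : ∀ n, ∀ᵐ ω ∂P, ‖max (gQ Q ω) (gQ (Rs n).1 ω)‖ ≤ c := by
      intro n
      filter_upwards [hgb Q hQ, hgb _ (Rs n).2] with ω h1 h2
      rw [Real.norm_eq_abs]
      exact (abs_max_le_max_abs_abs).trans (max_le h1 h2)
    have hconv : ∀ᵐ ω ∂P, Tendsto (fun n => max (gQ Q ω) (gQ (Rs n).1 ω)) atTop
        (𝓝 (max (gQ Q ω) (GG ω))) := by
      filter_upwards [hGGtend] with ω hω using tendsto_const_nhds.max hω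
    have hmaxlim : Tendsto (fun n => ∫ ω, max (gQ Q ω) (gQ (Rs n).1 ω) ∂P) atTop
        (𝓝 (∫ ω, max (gQ Q ω) (GG ω) ∂P)) := by
      refine tendsto_integral_of_dominated_convergence (fun _ => c)
        (fun n => (((hgsm Q).mono (F.le s)).aestronglyMeasurable).sup
          (((hgsm _).mono (F.le s)).aestronglyMeasurable)) (integrable_const c) hmb hconv
    have hintmax : ∫ ω, max (gQ Q ω) (GG ω) ∂P ≤ M :=
      le_of_tendsto hmaxlim (Eventually.of_forall hmaxint)
    have hmaxb : ∀ᵐ ω ∂P, |max (gQ Q ω) (GG ω)| ≤ c := by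
      filter_upwards [hgb Q hQ, hGGb] with ω h1 h2
      exact (abs_max_le_max_abs_abs).trans (max_le h1 h2)
    have hmaxintg : Integrable (fun ω => max (gQ Q ω) (GG ω)) P :=
      intg_of_bdd ((((hgsm Q).mono (F.le s)).aestronglyMeasurable).sup hGGsm) hmaxb
    have hzero : ∫ ω, (max (gQ Q ω) (GG ω) - GG ω) ∂P = 0 := by
      rw [integral_sub hmaxintg hGGint]
      have h1 : ∫ ω, max (gQ Q ω) (GG ω) ∂P - ∫ ω, GG ω ∂P ≤ 0 := by
        rw [hGGM]; linarith
      have h2 : 0 ≤ ∫ ω, max (gQ Q ω) (GG ω) ∂P - ∫ ω, GG ω ∂P := by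
        have := integral_mono_ae hGGint hmaxintg (ae_of_all _ fun ω => le_max_right _ _)
        linarith
      linarith
    have heq : (fun ω => max (gQ Q ω) (GG ω) - GG ω) =ᵐ[P] 0 :=
      (integral_eq_zero_iff_of_nonneg_ae
        (ae_of_all _ fun ω => sub_nonneg.2 (le_max_right _ _))
        (hmaxintg.sub hGGint)).1 hzero
    filter_upwards [heq] with ω hω
    have : max (gQ Q ω) (GG ω) = GG ω := by
      have := sub_eq_zero.1 hω; linarith [this]
    calc gQ Q ω ≤ max (gQ Q ω) (GG ω) := le_max_left _ _
      _ = GG ω := this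
  -- identify GG with W
  have hWGG : W =ᵐ[P] GG := by
    have hWle : W ≤ᵐ[P] GG := by
      refine hW.2 GG ?_
      rintro g ⟨Q, hQ, hg⟩
      exact hg.le.trans (hdom Q hQ)
    have hGGleW : GG ≤ᵐ[P] W := by
      have hub : ∀ n, gQ (Rs n).1 ≤ᵐ[P] W := fun n =>
        hW.1 _ ⟨(Rs n).1, (Rs n).2, EventuallyEq.rfl⟩
      filter_upwards [hGGtend, ae_all_iff.2 hub] with ω h1 h2
      exact le_of_tendsto h1 (Eventually.of_forall h2)
    exact hWle.antisymm hGGleW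
  refine ⟨fun n => (Rs n).1, fun n => (Rs n).2, hRmono, ?_, ⟨GG, hGGm.stronglyMeasurable, hWGG⟩, ?_⟩
  · filter_upwards [hGGtend, hWGG] with ω h1 h2
    rw [h2]; exact h1
  · filter_upwards [hGGb, hWGG] with ω h1 h2
    rw [h2]; exact h1

/-- **Time-consistent sublinear procedures.**  Let `𝒬` be a stable set of probability
measures all equivalent to `P` on `F T`, and let
`Π_{s,t}(Y) = ess sup_{Q ∈ 𝒬} E_Q[Y | F s]`.  Then `Π` is time consistent for
deterministic times, and each `Π_{s,t}` is monotone, positively homogeneous,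
subadditive, translation invariant w.r.t. bounded `F s`-measurable variables, and
continuous from below. -/
theorem stmt3 {Ω : Type} [mΩ : MeasurableSpace Ω]
    (F : Filtration ℝ mΩ) (P : Measure Ω) [IsProbabilityMeasure P] (T : ℝ)
    (𝒬 : Set (Measure Ω))
    (hne : 𝒬.Nonempty)
    (hprob : ∀ Q ∈ 𝒬, IsProbabilityMeasure Q)
    (hequiv : ∀ Q ∈ 𝒬, Q ≪ P ∧ P ≪ Q)
    (hcomp : ∀ s : ℝ, ∀ Q ∈ 𝒬, ∀ R ∈ 𝒬, ∃ S ∈ 𝒬,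
      (fun ω => (S.rnDeriv P ω).toReal) =ᵐ[P] fun ω =>
        (Q.rnDeriv P ω).toReal / (P[fun ω' => (Q.rnDeriv P ω').toReal | F s]) ω *
          (P[fun ω' => (R.rnDeriv P ω').toReal | F s]) ω)
    (hbif : ∀ s : ℝ, ∀ Q ∈ 𝒬, ∀ R ∈ 𝒬, ∀ A : Set Ω, MeasurableSet[F s] A →
      ∃ S ∈ 𝒬, ∀ X : Ω → ℝ, Measurable[F T] X → Bdd X →
        (S[X | F s]) =ᵐ[P] fun ω =>
          A.indicator (Q[X | F s]) ω + Aᶜ.indicator (R[X | F s]) ω)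
    (Proc : ℝ → ℝ → (Ω → ℝ) → Ω → ℝ)
    -- `Proc s t Y` is the essential supremum of the conditional expectations
    (hProc : ∀ (s t : ℝ) (Y : Ω → ℝ),
      IsCondEssSup P {f | ∃ Q ∈ 𝒬, f =ᵐ[P] Q[Y | F s]} (Proc s t Y)) :
    -- time consistency
    (∀ (r s t : ℝ) (Y : Ω → ℝ), r ≤ s → s ≤ t → t ≤ T →
      Measurable[F t] Y → Bdd Y → Proc r s (Proc s t Y) =ᵐ[P] Proc r t Y) ∧
    -- monotonicity
    (∀ (s t : ℝ) (Y Z : Ω → ℝ), Measurable[F t] Y → Bdd Y → Measurable[F t] Z →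
      Bdd Z → Y ≤ᵐ[P] Z → Proc s t Y ≤ᵐ[P] Proc s t Z) ∧
    -- positive homogeneity
    (∀ (s t : ℝ) (Y : Ω → ℝ) (c : ℝ), 0 ≤ c → Measurable[F t] Y → Bdd Y →
      Proc s t (fun ω => c * Y ω) =ᵐ[P] fun ω => c * Proc s t Y ω) ∧
    -- subadditivity
    (∀ (s t : ℝ) (Y Z : Ω → ℝ), Measurable[F t] Y → Bdd Y → Measurable[F t] Z →
      Bdd Z → Proc s t (fun ω => Y ω + Z ω) ≤ᵐ[P] fun ω => Proc s t Y ω + Proc s t Z ω) ∧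
    -- translation invariance w.r.t. bounded `F s`-measurable variables
    (∀ (s t : ℝ) (Y Z : Ω → ℝ), s ≤ t → Measurable[F t] Y → Bdd Y →
      Measurable[F s] Z → Bdd Z →
      Proc s t (fun ω => Y ω + Z ω) =ᵐ[P] fun ω => Proc s t Y ω + Z ω) ∧
    -- continuity from below
    (∀ (s t : ℝ) (X : ℕ → Ω → ℝ) (Xlim : Ω → ℝ),
      (∀ n, Measurable[F t] (X n)) → (∀ n, Bdd (X n)) →
      Measurable[F t] Xlim → Bdd Xlim →
      (∀ n, ∀ ω, X n ω ≤ X (n + 1) ω) →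
      (∀ ω, Tendsto (fun n => X n ω) atTop (𝓝 (Xlim ω))) →
      ∀ᵐ ω ∂P, Tendsto (fun n => Proc s t (X n) ω) atTop (𝓝 (Proc s t Xlim ω))) := by
  classical
  obtain ⟨Q₀, hQ₀⟩ := hne
  -- basic consequences of the essential-supremum characterisation
  have hub : ∀ (s t : ℝ) (Y : Ω → ℝ), ∀ Q ∈ 𝒬, Q[Y|F s] ≤ᵐ[P] Proc s t Y :=
    fun s t Y Q hQ => (hProc s t Y).1 _ ⟨Q, hQ, Filter.EventuallyEq.rfl⟩
  have hmin : ∀ (s t : ℝ) (Y h : Ω → ℝ), (∀ Q ∈ 𝒬, Q[Y|F s] ≤ᵐ[P] h) →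
      Proc s t Y ≤ᵐ[P] h := by
    intro s t Y h H
    refine (hProc s t Y).2 h ?_
    rintro g ⟨Q, hQ, hg⟩
    exact hg.le.trans (H Q hQ)
  have bddc : ∀ Y : Ω → ℝ, Bdd Y → ∃ c : ℝ, 0 ≤ c ∧ ∀ ω, |Y ω| ≤ c := by
    rintro Y ⟨c0, h⟩
    exact ⟨max c0 0, le_max_right _ _, fun ω => (h ω).trans (le_max_left _ _)⟩
  -- conditional expectations of bounded variables are bounded, P-a.e.
  have cbP : ∀ (s' : ℝ) (Z : Ω → ℝ) (c : ℝ), Measurable Z → (∀ ω, |Z ω| ≤ c) →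
      ∀ Q ∈ 𝒬, ∀ᵐ ω ∂P, |(Q[Z|F s']) ω| ≤ c := by
    intro s' Z c hZm hZc Q hQ
    haveI := hprob Q hQ
    exact (hequiv Q hQ).2.ae_le
      (condexp_abs_le (F.le s') hZm.stronglyMeasurable.aestronglyMeasurable (ae_of_all _ hZc))
  -- monotonicity, proved first since it is reused
  have MONO : ∀ (s t : ℝ) (Y Z : Ω → ℝ), Measurable[F t] Y → Bdd Y → Measurable[F t] Z →
      Bdd Z → Y ≤ᵐ[P] Z → Proc s t Y ≤ᵐ[P] Proc s t Z := by
    intro s t Y Z hYm hYb hZm hZb hYZ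
    obtain ⟨cY, hcY0, hcY⟩ := bddc Y hYb
    obtain ⟨cZ, hcZ0, hcZ⟩ := bddc Z hZb
    have hYm0 : Measurable Y := hYm.mono (F.le t) le_rfl
    have hZm0 : Measurable Z := hZm.mono (F.le t) le_rfl
    refine hmin s t Y _ (fun Q hQ => ?_)
    haveI := hprob Q hQ
    have hYint : Integrable Y Q :=
      intg_of_bdd hYm0.stronglyMeasurable.aestronglyMeasurable (ae_of_all _ hcY)
    have hZint : Integrable Z Q :=
      intg_of_bdd hZm0.stronglyMeasurable.aestronglyMeasurable (ae_of_all _ hcZ)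
    have h1 : Q[Y|F s] ≤ᵐ[Q] Q[Z|F s] :=
      condExp_mono hYint hZint ((hequiv Q hQ).1.ae_le hYZ)
    have h2 : Q[Y|F s] ≤ᵐ[P] Q[Z|F s] := (hequiv Q hQ).2.ae_le h1
    exact h2.trans (hub s t Z Q hQ)
  refine ⟨?_, MONO, ?_, ?_, ?_, ?_⟩
  · -- time consistency
    intro r s t Y hrs hst htT hYm hYb
    obtain ⟨c, hc, hYc⟩ := bddc Y hYb
    have hYmT : Measurable[F T] Y := hYm.mono (F.mono htT) le_rfl
    have hYm0 : Measurable Y := hYm.mono (F.le t) le_rfl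
    set W : Ω → ℝ := Proc s t Y with hWdef
    obtain ⟨R, hRmem, hRmono, hRtend, ⟨G, hGm, hWG⟩, hWb⟩ :=
      exists_rep F P T 𝒬 ⟨Q₀, hQ₀⟩ hprob hequiv hbif s Y hYmT hYb hc hYc W (hProc s t Y)
    have hWsm : ∀ ν : Measure Ω, ν ≪ P → AEStronglyMeasurable W ν := by
      intro ν hν
      exact ((hGm.mono (F.le s)).aestronglyMeasurable).congr (hν.ae_le hWG.symm)
    -- direction 1 : Proc r s W ≤ Proc r t Y (uses composition stability)
    have hdir1 : Proc r s W ≤ᵐ[P] Proc r t Y := by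
      refine hmin r s W _ (fun Q hQ => ?_)
      haveI := hprob Q hQ
      set g : ℕ → Ω → ℝ := fun n => (R n)[Y|F s] with hgdef
      have hgb : ∀ n, ∀ᵐ ω ∂P, |g n ω| ≤ c := fun n => cbP s Y c hYm0 hYc (R n) (hRmem n)
      have hgbQ : ∀ n, ∀ᵐ ω ∂Q, |g n ω| ≤ c := fun n => (hequiv Q hQ).1.ae_le (hgb n)
      have hgsmQ : ∀ n, AEStronglyMeasurable (g n) Q := fun n =>
        ((stronglyMeasurable_condExp).mono (F.le s)).aestronglyMeasurable
      have hgmonoQ : ∀ n, g n ≤ᵐ[Q] g (n + 1) := fun n => (hequiv Q hQ).1.ae_le (hRmono n)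
      have hglimQ : ∀ᵐ ω ∂Q, Tendsto (fun n => g n ω) atTop (𝓝 (W ω)) :=
        (hequiv Q hQ).1.ae_le hRtend
      have hconvQ := condexp_tendsto_of_tendsto (F.le r) Q g W c hgsmQ
        (hWsm Q (hequiv Q hQ).1) hgbQ hgmonoQ hglimQ
      have hconvP : ∀ᵐ ω ∂P, Tendsto (fun n => (Q[g n|F r]) ω) atTop
          (𝓝 ((Q[W|F r]) ω)) := (hequiv Q hQ).2.ae_le hconvQ
      have hcompn : ∀ n, Q[g n|F r] ≤ᵐ[P] Proc r t Y := by
        intro n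
        obtain ⟨S, hS, hSdens⟩ := hcomp s (R n) (hRmem n) Q hQ
        haveI := hprob S hS
        haveI := hprob (R n) (hRmem n)
        have hce := comp_condexp F P (hequiv (R n) (hRmem n)) (hequiv Q hQ) (hequiv S hS)
          hrs hYm0 hc hYc hSdens
        -- hce : S[Y|F r] =ᵐ[P] Q[(R n)[Y|F s]|F r]
        exact hce.symm.le.trans (hub r t Y S hS)
      filter_upwards [hconvP, ae_all_iff.2 hcompn] with ω h1 h2
      exact le_of_tendsto h1 (Eventually.of_forall h2)
    -- direction 2 : Proc r t Y ≤ Proc r s W (tower property)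
    have hdir2 : Proc r t Y ≤ᵐ[P] Proc r s W := by
      refine hmin r t Y _ (fun Q hQ => ?_)
      haveI := hprob Q hQ
      have hWbQ : ∀ᵐ ω ∂Q, |W ω| ≤ c := (hequiv Q hQ).1.ae_le hWb
      have hWintQ : Integrable W Q := intg_of_bdd (hWsm Q (hequiv Q hQ).1) hWbQ
      have h1 : Q[(Q[Y|F s])|F r] =ᵐ[Q] Q[Y|F r] :=
        condExp_condExp_of_le (F.mono hrs) (F.le s)
      have h2 : Q[(Q[Y|F s])|F r] ≤ᵐ[Q] Q[W|F r] :=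
        condExp_mono integrable_condExp hWintQ ((hequiv Q hQ).1.ae_le (hub s t Y Q hQ))
      have h3 : Q[Y|F r] ≤ᵐ[Q] Q[W|F r] := h1.symm.le.trans h2
      have h4 : Q[Y|F r] ≤ᵐ[P] Q[W|F r] := (hequiv Q hQ).2.ae_le h3
      exact h4.trans (hub r s W Q hQ)
    exact hdir1.antisymm hdir2
  · -- positive homogeneity
    intro s t Y c hc hYm hYb
    obtain ⟨cY, hcY0, hcY⟩ := bddc Y hYb
    have hYm0 : Measurable Y := hYm.mono (F.le t) le_rfl
    rcases eq_or_lt_of_le hc with hc0 | hcpos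
    · -- c = 0
      subst hc0
      have he : (fun ω => (0:ℝ) * Y ω) = (fun _ => (0:ℝ)) := funext fun ω => zero_mul _
      rw [he]
      have hupper : Proc s t (fun _ => (0:ℝ)) ≤ᵐ[P] fun _ => (0:ℝ) := by
        refine hmin s t _ _ (fun Q hQ => ?_)
        haveI := hprob Q hQ
        rw [condExp_const (F.le s)]
      have hlower : (fun _ => (0:ℝ)) ≤ᵐ[P] Proc s t (fun _ => (0:ℝ)) := by
        haveI := hprob Q₀ hQ₀
        have := hub s t (fun _ => (0:ℝ)) Q₀ hQ₀
        rwa [condExp_const (F.le s)] at this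
      have heq := hupper.antisymm hlower
      refine heq.trans (ae_of_all _ fun ω => ?_)
      simp
    · -- c > 0
      have hcne : c ≠ 0 := ne_of_gt hcpos
      have hsmul : ∀ Q ∈ 𝒬, Q[(fun ω => c * Y ω)|F s] =ᵐ[P] fun ω => c * (Q[Y|F s]) ω := by
        intro Q hQ
        haveI := hprob Q hQ
        have h1 : Q[c • Y|F s] =ᵐ[Q] c • Q[Y|F s] := condExp_smul c Y (F s)
        have h2 : Q[(fun ω => c * Y ω)|F s] =ᵐ[Q] fun ω => c * (Q[Y|F s]) ω := by
          have he : (fun ω => c * Y ω) = c • Y := by funext ω; simp [smul_eq_mul]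
          rw [he]
          refine h1.trans (ae_of_all _ fun ω => ?_)
          simp [smul_eq_mul]
        exact (hequiv Q hQ).2.ae_le h2
      have hupper : Proc s t (fun ω => c * Y ω) ≤ᵐ[P] fun ω => c * Proc s t Y ω := by
        refine hmin s t _ _ (fun Q hQ => ?_)
        refine (hsmul Q hQ).le.trans ?_
        filter_upwards [hub s t Y Q hQ] with ω hω
        exact mul_le_mul_of_nonneg_left hω hc
      have hlower : Proc s t Y ≤ᵐ[P] fun ω => (1/c) * Proc s t (fun ω' => c * Y ω') ω := by
        refine hmin s t _ _ (fun Q hQ => ?_)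
        have h1 : Q[Y|F s] =ᵐ[P] fun ω => (1/c) * (Q[(fun ω' => c * Y ω')|F s]) ω := by
          filter_upwards [hsmul Q hQ] with ω hω
          rw [hω]
          field_simp
        refine h1.le.trans ?_
        filter_upwards [hub s t (fun ω' => c * Y ω') Q hQ] with ω hω
        exact mul_le_mul_of_nonneg_left hω (by positivity)
      refine hupper.antisymm ?_
      filter_upwards [hlower] with ω hω
      have := mul_le_mul_of_nonneg_left hω hc
      calc c * Proc s t Y ω ≤ c * ((1/c) * Proc s t (fun ω' => c * Y ω') ω) := this
        _ = Proc s t (fun ω' => c * Y ω') ω := by field_simp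
  · -- subadditivity
    intro s t Y Z hYm hYb hZm hZb
    obtain ⟨cY, hcY0, hcY⟩ := bddc Y hYb
    obtain ⟨cZ, hcZ0, hcZ⟩ := bddc Z hZb
    have hYm0 : Measurable Y := hYm.mono (F.le t) le_rfl
    have hZm0 : Measurable Z := hZm.mono (F.le t) le_rfl
    refine hmin s t _ _ (fun Q hQ => ?_)
    haveI := hprob Q hQ
    have hYint : Integrable Y Q :=
      intg_of_bdd hYm0.stronglyMeasurable.aestronglyMeasurable (ae_of_all _ hcY)
    have hZint : Integrable Z Q :=
      intg_of_bdd hZm0.stronglyMeasurable.aestronglyMeasurable (ae_of_all _ hcZ)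
    have h1 : Q[(fun ω => Y ω + Z ω)|F s] =ᵐ[Q] Q[Y|F s] + Q[Z|F s] :=
      condExp_add hYint hZint (F s)
    have h2 : Q[(fun ω => Y ω + Z ω)|F s] =ᵐ[P] Q[Y|F s] + Q[Z|F s] :=
      (hequiv Q hQ).2.ae_le h1
    refine h2.le.trans ?_
    filter_upwards [hub s t Y Q hQ, hub s t Z Q hQ] with ω hω1 hω2
    exact add_le_add hω1 hω2
  · -- translation invariance
    intro s t Y Z hst hYm hYb hZm hZb
    obtain ⟨cY, hcY0, hcY⟩ := bddc Y hYb
    obtain ⟨cZ, hcZ0, hcZ⟩ := bddc Z hZb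
    have hYm0 : Measurable Y := hYm.mono (F.le t) le_rfl
    have hZm0 : Measurable Z := hZm.mono (F.le s) le_rfl
    have hZsm : StronglyMeasurable[F s] Z := hZm.stronglyMeasurable
    have hadd : ∀ Q ∈ 𝒬, Q[(fun ω => Y ω + Z ω)|F s] =ᵐ[P]
        fun ω => (Q[Y|F s]) ω + Z ω := by
      intro Q hQ
      haveI := hprob Q hQ
      have hYint : Integrable Y Q :=
        intg_of_bdd hYm0.stronglyMeasurable.aestronglyMeasurable (ae_of_all _ hcY)
      have hZint : Integrable Z Q :=
        intg_of_bdd hZm0.stronglyMeasurable.aestronglyMeasurable (ae_of_all _ hcZ)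
      have h1 : Q[(fun ω => Y ω + Z ω)|F s] =ᵐ[Q] Q[Y|F s] + Q[Z|F s] :=
        condExp_add hYint hZint (F s)
      have h2 : Q[Z|F s] = Z := condExp_of_stronglyMeasurable (F.le s) hZsm hZint
      refine (hequiv Q hQ).2.ae_le (h1.trans ?_)
      rw [h2]
      rfl
    have hupper : Proc s t (fun ω => Y ω + Z ω) ≤ᵐ[P] fun ω => Proc s t Y ω + Z ω := by
      refine hmin s t _ _ (fun Q hQ => ?_)
      refine (hadd Q hQ).le.trans ?_
      filter_upwards [hub s t Y Q hQ] with ω hω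
      exact add_le_add_left hω _
    have hlower : Proc s t Y ≤ᵐ[P]
        fun ω => Proc s t (fun ω' => Y ω' + Z ω') ω - Z ω := by
      refine hmin s t _ _ (fun Q hQ => ?_)
      have h1 : Q[Y|F s] =ᵐ[P]
          fun ω => (Q[(fun ω' => Y ω' + Z ω')|F s]) ω - Z ω := by
        filter_upwards [hadd Q hQ] with ω hω
        rw [hω]; ring
      refine h1.le.trans ?_
      filter_upwards [hub s t (fun ω' => Y ω' + Z ω') Q hQ] with ω hω
      exact sub_le_sub_right hω _
    refine hupper.antisymm ?_
    filter_upwards [hlower] with ω hω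
    linarith
  · -- continuity from below
    intro s t X Xlim hXm hXb hXlm hXlb hchain hXtend
    obtain ⟨c0, hc00, hc0⟩ := bddc (X 0) (hXb 0)
    obtain ⟨cl, hcl0, hcl⟩ := bddc Xlim hXlb
    set c : ℝ := max c0 cl with hcdef
    have hmono' : ∀ ω, Monotone fun n => X n ω := fun ω =>
      monotone_nat_of_le_succ fun n => hchain n ω
    have hXle : ∀ n ω, X n ω ≤ Xlim ω := fun n ω =>
      Monotone.ge_of_tendsto (hmono' ω) (hXtend ω) n
    have hXc : ∀ n ω, |X n ω| ≤ c := by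
      intro n ω
      refine abs_le.2 ⟨?_, ?_⟩
      · have h1 : -c0 ≤ X 0 ω := (abs_le.1 (hc0 ω)).1
        have h2 : X 0 ω ≤ X n ω := hmono' ω (Nat.zero_le n)
        have : -c ≤ -c0 := neg_le_neg (le_max_left _ _)
        linarith
      · exact (hXle n ω).trans ((abs_le.1 (hcl ω)).2.trans (le_max_right _ _))
    have hXm0 : ∀ n, Measurable (X n) := fun n => (hXm n).mono (F.le t) le_rfl
    have hXlm0 : Measurable Xlim := hXlm.mono (F.le t) le_rfl
    -- monotone sequence of procedures
    have hPmono : ∀ n, Proc s t (X n) ≤ᵐ[P] Proc s t (X (n + 1)) := fun n =>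
      MONO s t (X n) (X (n + 1)) (hXm n) (hXb n) (hXm (n + 1)) (hXb (n + 1))
        (ae_of_all _ (hchain n))
    have hPle : ∀ n, Proc s t (X n) ≤ᵐ[P] Proc s t Xlim := fun n =>
      MONO s t (X n) Xlim (hXm n) (hXb n) hXlm hXlb (ae_of_all _ (hXle n))
    set L : Ω → ℝ := fun ω => ⨆ n, min (Proc s t (X n) ω) (Proc s t Xlim ω) with hLdef
    have hbdd : ∀ ω, BddAbove (Set.range fun n => min (Proc s t (X n) ω) (Proc s t Xlim ω)) := by
      intro ω
      exact ⟨Proc s t Xlim ω, by rintro x ⟨n, rfl⟩; exact min_le_right _ _⟩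
    have hA : ∀ᵐ ω ∂P, (∀ n, Proc s t (X n) ω ≤ Proc s t (X (n + 1)) ω) ∧
        (∀ n, Proc s t (X n) ω ≤ Proc s t Xlim ω) :=
      (ae_all_iff.2 hPmono).and (ae_all_iff.2 hPle)
    have hLtend : ∀ᵐ ω ∂P, Tendsto (fun n => Proc s t (X n) ω) atTop (𝓝 (L ω)) := by
      filter_upwards [hA] with ω ⟨h1, h2⟩
      have hmin_eq : ∀ n, min (Proc s t (X n) ω) (Proc s t Xlim ω) = Proc s t (X n) ω :=
        fun n => min_eq_left (h2 n)
      have hm : Monotone fun n => min (Proc s t (X n) ω) (Proc s t Xlim ω) := by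
        refine monotone_nat_of_le_succ fun n => ?_
        rw [hmin_eq n, hmin_eq (n + 1)]
        exact h1 n
      have := tendsto_atTop_ciSup hm (hbdd ω)
      exact this.congr fun n => hmin_eq n
    have hLle : ∀ ω, L ω ≤ Proc s t Xlim ω := fun ω => ciSup_le fun n => min_le_right _ _
    have hPleL : Proc s t Xlim ≤ᵐ[P] L := by
      refine hmin s t Xlim L (fun Q hQ => ?_)
      haveI := hprob Q hQ
      have hconvQ : ∀ᵐ ω ∂Q, Tendsto (fun n => (Q[X n|F s]) ω) atTop
          (𝓝 ((Q[Xlim|F s]) ω)) := by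
        refine condexp_tendsto_of_tendsto (F.le s) Q X Xlim c
          (fun n => (hXm0 n).stronglyMeasurable.aestronglyMeasurable)
          hXlm0.stronglyMeasurable.aestronglyMeasurable
          (fun n => ae_of_all _ (hXc n)) (fun n => ae_of_all _ (hchain n))
          (ae_of_all _ hXtend)
      have hconvP : ∀ᵐ ω ∂P, Tendsto (fun n => (Q[X n|F s]) ω) atTop
          (𝓝 ((Q[Xlim|F s]) ω)) := (hequiv Q hQ).2.ae_le hconvQ
      have hubn : ∀ᵐ ω ∂P, ∀ n, (Q[X n|F s]) ω ≤ Proc s t (X n) ω :=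
        ae_all_iff.2 fun n => hub s t (X n) Q hQ
      filter_upwards [hconvP, hubn, hLtend] with ω h1 h2 h3
      exact le_of_tendsto_of_tendsto' h1 h3 h2
    have hLeq : ∀ᵐ ω ∂P, L ω = Proc s t Xlim ω := by
      filter_upwards [hPleL] with ω hω
      exact le_antisymm (hLle ω) hω
    filter_upwards [hLtend, hLeq] with ω h1 h2
    rw [← h2]
    exact h1
end

section
/- Let E be a Banach space and X a metrizable topological space. Every lower hemicontinuous multivalued mapping φ from X into E with nonempty closed convex values admits a continuous selector, i.e. a continuous function s: X → E with s(x) ∈ φ(x) for all x. -/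
/-- A multivalued mapping `φ : X → Set E` is lower hemicontinuous if
`{x | φ x ∩ V ≠ ∅}` is open for every open `V`. -/
def LowerHemicontinuous' {X E : Type*} [TopologicalSpace X] [TopologicalSpace E]
    (φ : X → Set E) : Prop :=
  ∀ V : Set E, IsOpen V → IsOpen {x | (φ x ∩ V).Nonempty}

open Metric Set Filter Topology

/-- Approximate selection lemma. -/
lemma michael_approx {X E : Type*} [TopologicalSpace X] [ParacompactSpace X] [NormalSpace X]
    [NormedAddCommGroup E] [NormedSpace ℝ E]
    (φ : X → Set E) (hlh : LowerHemicontinuous' φ) (hne : ∀ x, (φ x).Nonempty)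
    (hcv : ∀ x, Convex ℝ (φ x)) {ε : ℝ} (hε : 0 < ε) :
    ∃ f : X → E, Continuous f ∧ ∀ x, ∃ y ∈ φ x, ‖f x - y‖ < ε := by
  classical
  set U : E → Set X := fun c => {x | (φ x ∩ ball c ε).Nonempty} with hU
  have hUo : ∀ c, IsOpen (U c) := fun c => hlh _ isOpen_ball
  have hUc : (univ : Set X) ⊆ ⋃ c, U c := by
    intro x _
    obtain ⟨c, hc⟩ := hne x
    exact mem_iUnion.2 ⟨c, ⟨c, hc, mem_ball_self hε⟩⟩
  obtain ⟨p, hp⟩ := PartitionOfUnity.exists_isSubordinate isClosed_univ U hUo hUc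
  refine ⟨fun x => ∑ᶠ c, p c x • c, p.continuous_finsum_smul
    (fun c x _ => continuousAt_const), fun x => ?_⟩
  have hmem : ∀ c ∈ p.finsupport x, ∃ y ∈ φ x, ‖c - y‖ < ε := by
    intro c hc
    have hx : x ∈ U c := hp c (subset_closure ((p.mem_finsupport x).1 hc))
    obtain ⟨y, hy, hyb⟩ := hx
    exact ⟨y, hy, by simpa [norm_sub_rev, dist_eq_norm] using mem_ball.1 hyb⟩
  choose! y hy1 hy2 using hmem
  have hsum1 : ∑ c ∈ p.finsupport x, p c x = 1 := p.sum_finsupport (mem_univ x)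
  have hne' : (p.finsupport x).Nonempty := by
    by_contra h
    rw [Finset.not_nonempty_iff_eq_empty] at h
    simp [h] at hsum1
  refine ⟨∑ c ∈ p.finsupport x, p c x • y c, ?_, ?_⟩
  · exact (hcv x).sum_mem (fun c _ => p.nonneg c x) hsum1 (fun c hc => hy1 c hc)
  · have hfx : (∑ᶠ c, p c x • c) = ∑ c ∈ p.finsupport x, p c x • c :=
      (p.sum_finsupport_smul_eq_finsum (fun c _ => c)).symm
    show ‖(∑ᶠ c, p c x • c) - ∑ c ∈ p.finsupport x, p c x • y c‖ < ε
    rw [hfx, ← Finset.sum_sub_distrib]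
    have hcongr : ∀ c ∈ p.finsupport x, p c x • c - p c x • y c = p c x • (c - y c) := by
      intro c _; rw [smul_sub]
    rw [Finset.sum_congr rfl hcongr]
    calc ‖∑ c ∈ p.finsupport x, p c x • (c - y c)‖
        ≤ ∑ c ∈ p.finsupport x, ‖p c x • (c - y c)‖ := norm_sum_le _ _
      _ < ∑ c ∈ p.finsupport x, p c x * ε := by
          refine Finset.sum_lt_sum_of_nonempty hne' (fun c hc => ?_)
          rw [norm_smul, Real.norm_eq_abs, abs_of_nonneg (p.nonneg c x)]
          have hpos : 0 < p c x :=
            lt_of_le_of_ne (p.nonneg c x) (Ne.symm ((p.mem_finsupport x).1 hc))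
          exact mul_lt_mul_of_pos_left (hy2 c hc) hpos
      _ = ε := by rw [← Finset.sum_mul, hsum1, one_mul]

/-- Intersecting a lower hemicontinuous map with moving open balls. -/
lemma lhc_inter_ball {X E : Type*} [TopologicalSpace X]
    [NormedAddCommGroup E] [NormedSpace ℝ E]
    {φ : X → Set E} (hlh : LowerHemicontinuous' φ) {f : X → E} (hf : Continuous f)
    (ε : ℝ) : LowerHemicontinuous' (fun x => φ x ∩ ball (f x) ε) := by
  intro V hV
  rw [isOpen_iff_forall_mem_open]
  rintro x₀ ⟨y, ⟨hyφ, hyb⟩, hyV⟩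
  obtain ⟨r, hr, hrV⟩ := Metric.isOpen_iff.1 hV y hyV
  set δ : ℝ := ε - dist y (f x₀) with hδdef
  have hδ : 0 < δ := sub_pos.2 (mem_ball.1 hyb)
  set r' : ℝ := min r (δ / 2) with hr'def
  have hr' : 0 < r' := lt_min hr (half_pos hδ)
  refine ⟨{x | (φ x ∩ ball y r').Nonempty} ∩ f ⁻¹' ball (f x₀) (δ / 2), ?_, ?_, ?_⟩
  · rintro x ⟨⟨z, hzφ, hzb⟩, hxf⟩
    refine ⟨z, ⟨hzφ, ?_⟩, hrV (mem_ball.2 (lt_of_lt_of_le (mem_ball.1 hzb) (min_le_left _ _)))⟩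
    have h1 : dist z y < δ / 2 := lt_of_lt_of_le (mem_ball.1 hzb) (min_le_right _ _)
    have h2 : dist (f x) (f x₀) < δ / 2 := mem_ball.1 hxf
    have h3 : dist y (f x₀) = ε - δ := by rw [hδdef]; ring
    have := dist_triangle4 z y (f x₀) (f x)
    rw [mem_ball]
    rw [dist_comm (f x₀) (f x)] at this
    linarith
  · exact (hlh _ isOpen_ball).inter (isOpen_ball.preimage hf)
  · exact ⟨⟨y, hyφ, mem_ball_self hr'⟩, mem_ball_self (half_pos hδ)⟩

/-- **Michael selection theorem** (for metrizable domains, which are paracompact):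
every lower hemicontinuous multivalued mapping from a metrizable space into a Banach
space with nonempty closed convex values admits a continuous selector. -/
theorem stmt7 {X E : Type*} [TopologicalSpace X] [TopologicalSpace.MetrizableSpace X]
    [NormedAddCommGroup E] [NormedSpace ℝ E] [CompleteSpace E]
    (φ : X → Set E)
    (hlh : LowerHemicontinuous' φ)
    (hne : ∀ x, (φ x).Nonempty)
    (hcl : ∀ x, IsClosed (φ x))
    (hcv : ∀ x, Convex ℝ (φ x)) :
    ∃ s : X → E, Continuous s ∧ ∀ x, s x ∈ φ x := by
  classical
  letI : MetricSpace X := TopologicalSpace.metrizableSpaceMetric X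
  have key : ∀ (n : ℕ) (f : X → E), Continuous f →
      (∀ x, (φ x ∩ ball (f x) ((2:ℝ)⁻¹ ^ n)).Nonempty) →
      ∃ g : X → E, Continuous g ∧
        (∀ x, (φ x ∩ ball (g x) ((2:ℝ)⁻¹ ^ (n+1))).Nonempty) ∧
        ∀ x, dist (g x) (f x) ≤ 2 * (2:ℝ)⁻¹ ^ n := by
    intro n f hf hfn
    have hεn : (0:ℝ) < (2:ℝ)⁻¹ ^ (n+1) := by positivity
    obtain ⟨g, hgc, hg⟩ := michael_approx (fun x => φ x ∩ ball (f x) ((2:ℝ)⁻¹ ^ n))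
      (lhc_inter_ball hlh hf _) hfn
      (fun x => (hcv x).inter (convex_ball _ _)) hεn
    refine ⟨g, hgc, fun x => ?_, fun x => ?_⟩
    · obtain ⟨y, ⟨hyφ, _⟩, hyn⟩ := hg x
      exact ⟨y, hyφ, by simpa [mem_ball, dist_eq_norm, norm_sub_rev] using hyn⟩
    · obtain ⟨y, ⟨_, hyb⟩, hyn⟩ := hg x
      have h1 : dist (g x) y < (2:ℝ)⁻¹ ^ (n+1) := by
        rwa [dist_eq_norm]
      have h2 : dist y (f x) < (2:ℝ)⁻¹ ^ n := mem_ball.1 hyb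
      have h3 : ((2:ℝ)⁻¹ ^ (n+1)) ≤ (2:ℝ)⁻¹ ^ n :=
        pow_le_pow_of_le_one (by norm_num) (by norm_num) (Nat.le_succ n)
      have := dist_triangle (g x) y (f x)
      linarith
  -- initial approximation
  obtain ⟨f₀, hf₀c, hf₀⟩ := michael_approx φ hlh hne hcv (ε := (2:ℝ)⁻¹ ^ 0) (by norm_num)
  have hf₀' : ∀ x, (φ x ∩ ball (f₀ x) ((2:ℝ)⁻¹ ^ 0)).Nonempty := by
    intro x
    obtain ⟨y, hy, hyn⟩ := hf₀ x
    exact ⟨y, hy, by simpa [mem_ball, dist_eq_norm, norm_sub_rev] using hyn⟩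
  choose! G hG1 hG2 hG3 using key
  -- the sequence
  set F : ℕ → X → E := fun n => Nat.rec f₀ (fun n f => G n f) n with hF
  have hFs : ∀ n, F (n+1) = G n (F n) := fun n => rfl
  have hinv : ∀ n, Continuous (F n) ∧ ∀ x, (φ x ∩ ball (F n x) ((2:ℝ)⁻¹ ^ n)).Nonempty := by
    intro n
    induction n with
    | zero => exact ⟨hf₀c, hf₀'⟩
    | succ n ih =>
      rw [hFs]
      exact ⟨hG1 n (F n) ih.1 ih.2, hG2 n (F n) ih.1 ih.2⟩
  have hstep : ∀ n x, dist (F (n+1) x) (F n x) ≤ 2 * (2:ℝ)⁻¹ ^ n := by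
    intro n x
    rw [hFs]
    exact hG3 n (F n) (hinv n).1 (hinv n).2 x
  -- Cauchy estimate: for n ≤ m, dist (F n x) (F m x) ≤ 4 * (2⁻¹)^n
  have hcauchy : ∀ n m, n ≤ m → ∀ x, dist (F n x) (F m x) ≤ 4 * (2:ℝ)⁻¹ ^ n := by
    intro n m hnm x
    calc dist (F n x) (F m x)
        ≤ ∑ i ∈ Finset.Ico n m, dist (F i x) (F (i+1) x) :=
          dist_le_Ico_sum_dist (fun k => F k x) hnm
      _ ≤ ∑ i ∈ Finset.Ico n m, 2 * (2:ℝ)⁻¹ ^ i := by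
          refine Finset.sum_le_sum fun i _ => ?_
          rw [dist_comm]; exact hstep i x
      _ = 2 * ∑ i ∈ Finset.Ico n m, (2:ℝ)⁻¹ ^ i := by rw [Finset.mul_sum]
      _ ≤ 2 * (2 * (2:ℝ)⁻¹ ^ n) := by
          gcongr
          have h1 : ∑ i ∈ Finset.Ico n m, (2:ℝ)⁻¹ ^ i
              = (2:ℝ)⁻¹ ^ n * ∑ i ∈ Finset.range (m - n), (2:ℝ)⁻¹ ^ i := by
            rw [Finset.sum_Ico_eq_sum_range, Finset.mul_sum]
            exact Finset.sum_congr rfl fun i _ => by rw [pow_add]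
          rw [h1, mul_comm]
          have h2 : ∑ i ∈ Finset.range (m - n), (2:ℝ)⁻¹ ^ i ≤ 2 := by
            have := sum_geometric_two_le (m - n)
            simpa [one_div] using this
          have h3 : (0:ℝ) ≤ (2:ℝ)⁻¹ ^ n := by positivity
          calc (∑ i ∈ Finset.range (m - n), (2:ℝ)⁻¹ ^ i) * (2:ℝ)⁻¹ ^ n
              ≤ 2 * (2:ℝ)⁻¹ ^ n := by gcongr
            _ = 2 * (2:ℝ)⁻¹ ^ n := rfl
      _ = 4 * (2:ℝ)⁻¹ ^ n := by ring
  -- pointwise limit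
  have htend0 : Tendsto (fun n : ℕ => (2:ℝ)⁻¹ ^ n) atTop (𝓝 0) :=
    tendsto_pow_atTop_nhds_zero_of_lt_one (by norm_num) (by norm_num)
  have hCS : ∀ x, CauchySeq (fun n => F n x) := by
    intro x
    rw [Metric.cauchySeq_iff']
    intro ε hε
    obtain ⟨N, hN⟩ := (Metric.tendsto_atTop.1 (htend0.const_mul 4)) ε hε
    refine ⟨N, fun n hn => ?_⟩
    have := hcauchy N n hn x
    have h4 := hN N le_rfl
    rw [Real.dist_eq, mul_zero, sub_zero, abs_of_nonneg (by positivity)] at h4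
    rw [dist_comm]
    linarith
  choose s hs using fun x => cauchySeq_tendsto_of_complete (hCS x)
  refine ⟨s, ?_, ?_⟩
  · -- uniform convergence gives continuity
    have hUC : UniformCauchySeqOn F atTop univ := by
      rw [Metric.uniformCauchySeqOn_iff]
      intro ε hε
      obtain ⟨N, hN⟩ := (Metric.tendsto_atTop.1 (htend0.const_mul 4)) ε hε
      refine ⟨N, fun m hm n hn x _ => ?_⟩
      have h4 := hN N le_rfl
      rw [Real.dist_eq, mul_zero, sub_zero, abs_of_nonneg (by positivity)] at h4
      rcases le_total m n with h | h
      · have := hcauchy m n h x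
        have h5 : ((2:ℝ)⁻¹) ^ m ≤ (2:ℝ)⁻¹ ^ N :=
          pow_le_pow_of_le_one (by norm_num) (by norm_num) hm
        linarith
      · have := hcauchy n m h x
        have h5 : ((2:ℝ)⁻¹) ^ n ≤ (2:ℝ)⁻¹ ^ N :=
          pow_le_pow_of_le_one (by norm_num) (by norm_num) hn
        rw [dist_comm]
        linarith
    have hTU : TendstoUniformlyOn F s atTop univ :=
      hUC.tendstoUniformlyOn_of_tendsto (fun x _ => hs x)
    have := hTU.continuousOn (Frequently.of_forall fun n => ((hinv n).1).continuousOn)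
    rwa [continuousOn_univ] at this
  · -- membership
    intro x
    rw [← (hcl x).closure_eq]
    rw [Metric.mem_closure_iff]
    intro ε hε
    obtain ⟨N, hN⟩ := (Metric.tendsto_atTop.1 (htend0.const_mul 5)) ε hε
    have h5 := hN N le_rfl
    rw [Real.dist_eq, mul_zero, sub_zero, abs_of_nonneg (by positivity)] at h5
    obtain ⟨y, hy, hyb⟩ := (hinv N).2 x
    refine ⟨y, hy, ?_⟩
    have hsd : dist (s x) (F N x) ≤ 4 * (2:ℝ)⁻¹ ^ N := by
      have : Tendsto (fun m => dist (F N x) (F m x)) atTop (𝓝 (dist (F N x) (s x))) :=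
        (Continuous.dist continuous_const continuous_id).continuousAt.tendsto.comp (hs x)
      rw [dist_comm]
      exact le_of_tendsto this (eventually_atTop.2 ⟨N, fun m hm => hcauchy N m hm x⟩)
    have hyF : dist (F N x) y < (2:ℝ)⁻¹ ^ N := by
      have := mem_ball.1 hyb; rwa [dist_comm]
    have := dist_triangle (s x) (F N x) y
    linarith
end

section
/- With Λ as in the stochastic volatility setting (Λ(t,s,y) the kernel of the linear map (α,ν) ↦ α√(1-ρ(t,s,y)²) + νρ(t,s,y), ρ continuous with values in (-1,1)), let φ(s,y) = C(1 + (s·s + y·y)^{1/2}) for some C > 0, and define Λ^φ(t,s,y) = {(α,ν) ∈ Λ(t,s,y) : ‖α‖² + ‖ν‖² ≤ φ(s,y)}. Then for every K > 0 the truncation Λ^φ_K is lower hemicontinuous, and Λ^φ has linear growth: every (α,ν) ∈ Λ^φ(t,s,y) satisfies ‖(α,ν)‖ ≤ C'(1 + ‖(s,y)‖) for some constant C'. -/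
set_option maxHeartbeats 1000000


/-- A multivalued mapping `φ : X → Set E` is lower hemicontinuous if
`{x | φ x ∩ V ≠ ∅}` is open for every open `V`. -/
def LowerHemicontinuousMV {X E : Type*} [TopologicalSpace X] [TopologicalSpace E]
    (φ : X → Set E) : Prop :=
  ∀ V : Set E, IsOpen V → IsOpen {x | (φ x ∩ V).Nonempty}

lemma key_norm {E : Type*} [NormedAddCommGroup E] [NormedSpace ℝ E]
    (r : ℝ) (hr : r ^ 2 < 1) (w : E) :
    ‖(-(r / Real.sqrt (1 - r ^ 2))) • w‖ ^ 2 + ‖w‖ ^ 2 = ‖w‖ ^ 2 / (1 - r ^ 2) := by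
  have h1 : (0:ℝ) < 1 - r ^ 2 := by linarith
  have ha : (0:ℝ) < Real.sqrt (1 - r ^ 2) := Real.sqrt_pos.mpr h1
  have hs : Real.sqrt (1 - r ^ 2) ^ 2 = 1 - r ^ 2 := Real.sq_sqrt h1.le
  rw [norm_smul, mul_pow, Real.norm_eq_abs, sq_abs]
  field_simp
  rw [hs]
  ring

lemma key_eq {E : Type*} [NormedAddCommGroup E] [NormedSpace ℝ E]
    (r : ℝ) (hr : r ^ 2 < 1) (w : E) :
    Real.sqrt (1 - r ^ 2) • ((-(r / Real.sqrt (1 - r ^ 2))) • w) + r • w = 0 := by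
  have h1 : (0:ℝ) < 1 - r ^ 2 := by linarith
  have ha : Real.sqrt (1 - r ^ 2) ≠ 0 := ne_of_gt (Real.sqrt_pos.mpr h1)
  rw [smul_smul]
  have : Real.sqrt (1 - r ^ 2) * (-(r / Real.sqrt (1 - r ^ 2))) = -r := by
    field_simp
  rw [this, neg_smul, neg_add_cancel]


/-- **The mapping `Λ^φ` satisfies hypothesis `H̄_Λ`.**  With
`Λ(t,s,y) = {(α,ν) : α√(1-ρ(t,s,y)²) + νρ(t,s,y) = 0}` (`ρ` continuous with values
in `(-1,1)`), `φ(s,y) = C(1 + (s·s + y·y)^{1/2})`, and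
`Λ^φ(t,s,y) = {(α,ν) ∈ Λ(t,s,y) : ‖α‖² + ‖ν‖² ≤ φ(s,y)}`:
every truncation `Λ^φ_K` (`K > 0`) is lower hemicontinuous, and `Λ^φ` has linear
growth: `‖(α,ν)‖ ≤ C'(1 + ‖(s,y)‖)` for all `(α,ν) ∈ Λ^φ(t,s,y)`. -/
theorem stmt9 (n : ℕ)
    (ρ : ℝ × EuclideanSpace ℝ (Fin n) × EuclideanSpace ℝ (Fin n) → ℝ)
    (hρc : Continuous ρ)
    (hρ : ∀ q, ρ q ∈ Set.Ioo (-1 : ℝ) 1)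
    (C : ℝ) (hC : 0 < C)
    (Λφ : ℝ × EuclideanSpace ℝ (Fin n) × EuclideanSpace ℝ (Fin n) →
      Set (EuclideanSpace ℝ (Fin n) × EuclideanSpace ℝ (Fin n)))
    (hΛφ : ∀ q, Λφ q =
      {p : EuclideanSpace ℝ (Fin n) × EuclideanSpace ℝ (Fin n) |
        Real.sqrt (1 - ρ q ^ 2) • p.1 + ρ q • p.2 = 0 ∧
        ‖p.1‖ ^ 2 + ‖p.2‖ ^ 2 ≤ C * (1 + Real.sqrt (‖q.2.1‖ ^ 2 + ‖q.2.2‖ ^ 2))}) :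
    (∀ K : ℝ, 0 < K →
      LowerHemicontinuousMV (fun q : ℝ × EuclideanSpace ℝ (Fin n) × EuclideanSpace ℝ (Fin n) =>
        {p ∈ Λφ q | ‖p.1‖ ^ 2 + ‖p.2‖ ^ 2 ≤ K})) ∧
    (∃ C' : ℝ, 0 < C' ∧ ∀ q, ∀ p ∈ Λφ q,
      Real.sqrt (‖p.1‖ ^ 2 + ‖p.2‖ ^ 2) ≤
        C' * (1 + Real.sqrt (‖q.2.1‖ ^ 2 + ‖q.2.2‖ ^ 2))) := by
  have hρ2 : ∀ q, ρ q ^ 2 < 1 := by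
    intro q
    have h := hρ q
    nlinarith [h.1, h.2]
  have hpos : ∀ q, (0:ℝ) < 1 - ρ q ^ 2 := fun q => by linarith [hρ2 q]
  have hane : ∀ q, Real.sqrt (1 - ρ q ^ 2) ≠ 0 :=
    fun q => ne_of_gt (Real.sqrt_pos.mpr (hpos q))
  set R : ℝ × EuclideanSpace ℝ (Fin n) × EuclideanSpace ℝ (Fin n) → ℝ :=
    fun q => Real.sqrt (‖q.2.1‖ ^ 2 + ‖q.2.2‖ ^ 2) with hR
  have hRc : Continuous R := by
    apply Real.continuous_sqrt.comp
    fun_prop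
  have hRnn : ∀ q, 0 ≤ R q := fun q => Real.sqrt_nonneg _
  constructor
  · -- lower hemicontinuity
    intro K hK V hV
    rw [isOpen_iff_mem_nhds]
    rintro q0 ⟨p0, ⟨hp0Λ, hp0K⟩, hp0V⟩
    by_cases hp0 : p0 = 0
    · -- trivial case: 0 ∈ V, and 0 belongs to every value
      refine Filter.mem_of_superset Filter.univ_mem fun q _ => ⟨0, ⟨?_, ?_⟩, ?_⟩
      · rw [hΛφ q]
        constructor
        · simp
        · simp only [Prod.fst_zero, Prod.snd_zero, norm_zero]
          have : 0 ≤ C * (1 + Real.sqrt (‖q.2.1‖ ^ 2 + ‖q.2.2‖ ^ 2)) := by positivity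
          nlinarith
      · simp only [Prod.fst_zero, Prod.snd_zero, norm_zero]
        nlinarith
      · simpa [hp0] using hp0V
    · -- main case
      rw [hΛφ q0] at hp0Λ
      obtain ⟨heq0, hbd0⟩ := hp0Λ
      -- p0.2 ≠ 0 and formula for p0.1
      have hα0 : p0.1 = (-(ρ q0 / Real.sqrt (1 - ρ q0 ^ 2))) • p0.2 := by
        have h := heq0
        have : Real.sqrt (1 - ρ q0 ^ 2) • p0.1 = -(ρ q0 • p0.2) :=
          eq_neg_of_add_eq_zero_left h
        calc p0.1 = (Real.sqrt (1 - ρ q0 ^ 2))⁻¹ • (Real.sqrt (1 - ρ q0 ^ 2) • p0.1) := by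
              rw [smul_smul, inv_mul_cancel₀ (hane q0), one_smul]
          _ = (-(ρ q0 / Real.sqrt (1 - ρ q0 ^ 2))) • p0.2 := by
              rw [this, smul_neg, smul_smul]
              rw [← neg_smul]
              congr 1
              field_simp
      have hν0 : p0.2 ≠ 0 := by
        intro h
        apply hp0
        have : p0.1 = 0 := by rw [hα0, h, smul_zero]
        exact Prod.ext this h
      set m : ℝ := ‖p0.1‖ ^ 2 + ‖p0.2‖ ^ 2 with hm
      have hmpos : 0 < m := by
        have : 0 < ‖p0.2‖ ^ 2 := pow_pos (norm_pos_iff.mpr hν0) 2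
        have h1 : 0 ≤ ‖p0.1‖ ^ 2 := by positivity
        linarith
      have hmid : m = ‖p0.2‖ ^ 2 / (1 - ρ q0 ^ 2) := by
        rw [hm, hα0, key_norm _ (hρ2 q0)]
      -- pick t ∈ (0,1) with t • p0 ∈ V
      obtain ⟨ε, hε, hball⟩ := Metric.isOpen_iff.mp hV p0 hp0V
      have hnp0 : 0 < ‖p0‖ := norm_pos_iff.mpr hp0
      set δ : ℝ := min (ε / ‖p0‖) 1 with hδ
      have hδpos : 0 < δ := lt_min (div_pos hε hnp0) one_pos
      set t : ℝ := 1 - δ / 2 with ht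
      have ht0 : 0 < t := by
        have : δ ≤ 1 := min_le_right _ _
        simp only [ht]; linarith
      have ht1 : t < 1 := by simp only [ht]; linarith
      have htV : t • p0 ∈ V := by
        apply hball
        rw [Metric.mem_ball, dist_eq_norm]
        have hsub := sub_smul t 1 p0
        rw [one_smul] at hsub
        rw [← hsub, norm_smul, Real.norm_eq_abs]
        have : |t - 1| = δ / 2 := by
          rw [ht]; rw [abs_of_nonpos (by linarith)]; ring
        rw [this]
        have hδε : δ ≤ ε / ‖p0‖ := min_le_left _ _
        calc δ / 2 * ‖p0‖ ≤ (ε / ‖p0‖) / 2 * ‖p0‖ := by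
              apply mul_le_mul_of_nonneg_right _ hnp0.le
              linarith
          _ = ε / 2 := by field_simp
          _ < ε := by linarith
      -- the continuous selection
      set w : EuclideanSpace ℝ (Fin n) := t • p0.2 with hw
      set g : ℝ × EuclideanSpace ℝ (Fin n) × EuclideanSpace ℝ (Fin n) →
          EuclideanSpace ℝ (Fin n) × EuclideanSpace ℝ (Fin n) :=
        fun q => ((-(ρ q / Real.sqrt (1 - ρ q ^ 2))) • w, w) with hg
      have hgc : Continuous g := by
        apply Continuous.prodMk _ continuous_const
        apply Continuous.smul (f := fun q => -(ρ q / Real.sqrt (1 - ρ q ^ 2))) (g := fun _ => w) _ continuous_const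
        apply Continuous.neg
        apply Continuous.div hρc (Real.continuous_sqrt.comp (by fun_prop))
        exact hane
      set h : ℝ × EuclideanSpace ℝ (Fin n) × EuclideanSpace ℝ (Fin n) → ℝ :=
        fun q => ‖w‖ ^ 2 / (1 - ρ q ^ 2) with hh
      have hhc : Continuous h := by
        apply Continuous.div continuous_const (by fun_prop)
        exact fun q => ne_of_gt (hpos q)
      have hhval : ∀ q, ‖(g q).1‖ ^ 2 + ‖(g q).2‖ ^ 2 = h q :=
        fun q => key_norm _ (hρ2 q) w
      have hwn : ‖w‖ ^ 2 = t ^ 2 * ‖p0.2‖ ^ 2 := by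
        rw [hw, norm_smul, mul_pow, Real.norm_eq_abs, sq_abs]
      have hhq0 : h q0 = t ^ 2 * m := by
        show ‖w‖ ^ 2 / (1 - ρ q0 ^ 2) = t ^ 2 * m
        rw [hwn, hmid]; ring
      have hht : h q0 < m := by
        rw [hhq0]
        have h2 : t ^ 2 < 1 := by nlinarith
        nlinarith [mul_pos (by nlinarith : (0:ℝ) < 1 - t ^ 2) hmpos]
      have hgq0 : g q0 = t • p0 := by
        rw [Prod.ext_iff]
        constructor
        · show (-(ρ q0 / Real.sqrt (1 - ρ q0 ^ 2))) • w = (t • p0).1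
          rw [hw, Prod.smul_fst, hα0, smul_comm]
        · rfl
      -- the open neighbourhood
      have hU : IsOpen ({q | h q < K} ∩ {q | h q < C * (1 + R q)} ∩ g ⁻¹' V) := by
        apply IsOpen.inter
        apply IsOpen.inter
        · exact isOpen_lt hhc continuous_const
        · exact isOpen_lt hhc (continuous_const.mul (continuous_const.add hRc))
        · exact hV.preimage hgc
      apply Filter.mem_of_superset (hU.mem_nhds ?_)
      · rintro q ⟨⟨h1, h2⟩, h3⟩
        refine ⟨g q, ⟨?_, ?_⟩, h3⟩
        · rw [hΛφ q]
          refine ⟨key_eq _ (hρ2 q) w, ?_⟩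
          rw [hhval q]
          exact le_of_lt h2
        · rw [hhval q]
          exact le_of_lt h1
      · refine ⟨⟨?_, ?_⟩, ?_⟩
        · show h q0 < K
          exact lt_of_lt_of_le hht hp0K
        · show h q0 < C * (1 + R q0)
          exact lt_of_lt_of_le hht hbd0
        · show g q0 ∈ V
          rw [hgq0]; exact htV
  · -- linear growth
    refine ⟨Real.sqrt C + 1, by positivity, fun q p hp => ?_⟩
    rw [hΛφ q] at hp
    obtain ⟨-, hbd⟩ := hp
    have h1 : (1:ℝ) ≤ 1 + R q := by linarith [hRnn q]
    calc Real.sqrt (‖p.1‖ ^ 2 + ‖p.2‖ ^ 2)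
        ≤ Real.sqrt (C * (1 + R q)) := Real.sqrt_le_sqrt hbd
      _ = Real.sqrt C * Real.sqrt (1 + R q) := Real.sqrt_mul hC.le _
      _ ≤ Real.sqrt C * (1 + R q) := by
          apply mul_le_mul_of_nonneg_left ?_ (Real.sqrt_nonneg C)
          have h2 : Real.sqrt (1 + R q) ≤ Real.sqrt ((1 + R q) ^ 2) :=
            Real.sqrt_le_sqrt (by nlinarith)
          rwa [Real.sqrt_sq (by linarith)] at h2
      _ ≤ (Real.sqrt C + 1) * (1 + R q) := by nlinarith [Real.sqrt_nonneg C, hRnn q]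
end
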